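/- arXiv:1703.00653 — 7 statements merged into one kernel-verified Lean document; each statement's English description precedes it below -/
import Mathlib

section
/- Let θ₁,…,θ_k ∈ [0,2π) be distinct, let m₁,…,m_k be strictly positive integers, and let α = (α_n)_{n≥0} be a bounded sequence of complex numbers. Then the following two sets of conditions are equivalent. (L₁): there exist sequences β⁽¹⁾,…,β⁽ᵏ⁾ of complex numbers with α = β⁽¹⁾ + ⋯ + β⁽ᵏ⁾ such that for each j, (S − e^{iθ_j})^{m_j} β⁽ʲ⁾ ∈ ℓ² and β⁽ʲ⁾ ∈ ℓ^{2m_j+2}. (L₂): ∏_{j=1}^{k}(S − e^{iθ_j})^{m_j} α ∈ ℓ², and for each q ∈ {1,…,k}, ∏_{j≠q}(S − e^{iθ_j})^{m_j} α ∈ ℓ^{2m_q+2}. -/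
open scoped BigOperators

/-- Application of a polynomial in the shift operator `S`, `(Sa)_n = a_{n+1}`,
to a one-sided sequence: `(P(S)a)_n = ∑_ℓ P_ℓ a_{n+ℓ}`. -/
noncomputable def applyPoly (P : Polynomial ℂ) (a : ℕ → ℂ) : ℕ → ℂ :=
  fun n => ∑ ℓ ∈ Finset.range (P.natDegree + 1), P.coeff ℓ * a (n + ℓ)

/-!
Since `P ↦ P(S)` is `aeval S`, the statement is linear algebra: every `ℓ^p` is a shift-invariant
subspace and `ℓ² ⊆ ℓ^p` for `p ≥ 2`. The factors `f_j = (X - e^{iθ_j})^{m_j}` are pairwise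
coprime, so a Bézout identity `∑_j c_j ∏_{i ≠ j} f_i = 1` produces the decomposition
`β_j = (c_j ∏_{i ≠ j} f_i)(S) α`. Conversely, each product in `(L₂)` applied to `∑_j β_j` is a
sum of terms, each of which is a polynomial multiple of `f_j(S) β_j ∈ ℓ²` or of `β_q ∈ ℓ^{2m_q+2}`.
-/

open Function Polynomial Finset
open scoped ENNReal

namespace Module.End

variable {R M : Type*} [CommSemiring R] [AddCommMonoid M] [Module R M] {T : Module.End R M}
  {W : Submodule R M}

theorem aeval_apply_mem (hW : W ∈ T.invtSubmodule) (P : R[X]) {x : M} (hx : x ∈ W) :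
    aeval T P x ∈ W := by
  induction P using Polynomial.induction_on generalizing x with
  | C c => simpa using W.smul_mem c hx
  | add P Q hP hQ => simpa using W.add_mem (hP hx) (hQ hx)
  | monomial n c ih =>
    rw [pow_succ, ← mul_assoc, map_mul, mul_apply, aeval_X]
    exact ih ((T.mem_invtSubmodule.mp hW) hx)

theorem aeval_apply_mem_of_dvd (hW : W ∈ T.invtSubmodule) {P Q : R[X]} (hPQ : P ∣ Q) {x : M}
    (hx : aeval T P x ∈ W) : aeval T Q x ∈ W := by
  obtain ⟨D, rfl⟩ := hPQ
  rw [mul_comm, map_mul, mul_apply]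
  exact aeval_apply_mem hW D hx

theorem exists_sum_eq_aeval_mem_iff {ι : Type*} [Fintype ι] [Nonempty ι] [DecidableEq ι]
    {f : ι → R[X]} (hf : Pairwise (IsCoprime on f)) {V : ι → Submodule R M}
    (hW : W ∈ T.invtSubmodule) (hV : ∀ j, V j ∈ T.invtSubmodule) (hWV : ∀ j, W ≤ V j) (a : M) :
    (∃ b : ι → M, a = ∑ j, b j ∧ (∀ j, aeval T (f j) (b j) ∈ W) ∧ ∀ j, b j ∈ V j) ↔
      aeval T (∏ j, f j) a ∈ W ∧ ∀ q, aeval T (∏ j ∈ univ.erase q, f j) a ∈ V q := by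
  constructor
  · rintro ⟨b, rfl, hbW, hbV⟩
    refine ⟨?_, fun q => ?_⟩
    · rw [map_sum]
      exact W.sum_mem fun j _ =>
        aeval_apply_mem_of_dvd hW (dvd_prod_of_mem f (mem_univ j)) (hbW j)
    · rw [map_sum]
      refine (V q).sum_mem fun j _ => ?_
      rcases eq_or_ne j q with rfl | hjq
      · exact aeval_apply_mem (hV j) _ (hbV j)
      · exact hWV q <| aeval_apply_mem_of_dvd hW
          (dvd_prod_of_mem f (mem_erase.mpr ⟨hjq, mem_univ j⟩)) (hbW j)
  · rintro ⟨haW, haV⟩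
    obtain ⟨c, hc⟩ := exists_sum_eq_one_iff_pairwise_coprime'.mpr hf
    simp only [compl_singleton] at hc
    refine ⟨fun j => aeval T (c j * ∏ i ∈ univ.erase j, f i) a, ?_, fun j => ?_, fun j => ?_⟩
    · rw [← LinearMap.sum_apply, ← map_sum, hc, map_one, one_apply]
    · rw [← mul_apply, ← map_mul, mul_left_comm, mul_prod_erase _ _ (mem_univ j)]
      exact aeval_apply_mem_of_dvd hW (dvd_mul_left _ _) haW
    · exact aeval_apply_mem_of_dvd (hV j) (dvd_mul_left _ _) (haV j)

end Module.End

theorem Memℓp.comp_injective {α β E : Type*} [NormedAddCommGroup E] {p : ℝ≥0∞} {f : β → E}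
    (hf : Memℓp f p) {g : α → β} (hg : Function.Injective g) : Memℓp (f ∘ g) p := by
  rcases p.trichotomy with rfl | rfl | hp
  · exact memℓp_zero (hf.finite_dsupport.preimage hg.injOn)
  · exact memℓp_infty (hf.bddAbove.mono (Set.range_comp_subset_range g fun i => ‖f i‖))
  · exact memℓp_gen ((hf.summable hp).comp_injective hg)

theorem summable_norm_pow_iff_memℓp {α E : Type*} [NormedAddCommGroup E] {n : ℕ} (hn : n ≠ 0)
    (f : α → E) : Summable (fun i => ‖f i‖ ^ n) ↔ Memℓp f n := by
  rw [memℓp_gen_iff (by simpa using Nat.pos_of_ne_zero hn)]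
  simp [Real.rpow_natCast]

section Shift

variable (R : Type*) [CommSemiring R]

noncomputable def shift : Module.End R (ℕ → R) := LinearMap.funLeft R R Nat.succ

theorem shift_pow_apply (i : ℕ) (a : ℕ → R) (n : ℕ) : (shift R ^ i) a n = a (n + i) := by
  induction i generalizing a with
  | zero => rfl
  | succ i ih => rw [pow_succ, Module.End.mul_apply, ih]; rfl

end Shift

theorem applyPoly_eq_aeval_shift (P : ℂ[X]) (a : ℕ → ℂ) : applyPoly P a = aeval (shift ℂ) P a := by
  ext n
  simp [applyPoly, aeval_eq_sum_range, shift_pow_apply]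

section Memℓp

variable (𝕜 : Type*) [NormedField 𝕜]

def memℓpSubmodule (p : ℝ≥0∞) : Submodule 𝕜 (ℕ → 𝕜) where
  carrier := {a | Memℓp a p}
  add_mem' := Memℓp.add
  zero_mem' := zero_memℓp
  smul_mem' c _ ha := ha.const_smul c

theorem memℓpSubmodule_mem_invtSubmodule_shift (p : ℝ≥0∞) :
    memℓpSubmodule 𝕜 p ∈ (shift 𝕜).invtSubmodule :=
  (Module.End.mem_invtSubmodule _).mpr fun _ ha => Memℓp.comp_injective ha Nat.succ_injective

theorem memℓpSubmodule_mono {p q : ℝ≥0∞} (hpq : p ≤ q) : memℓpSubmodule 𝕜 p ≤ memℓpSubmodule 𝕜 q :=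
  fun _ ha => Memℓp.of_exponent_ge ha hpq

end Memℓp

theorem Complex.injOn_exp_mul_I : Set.InjOn (fun t : ℝ => exp (t * I)) (Set.Ico 0 (2 * Real.pi)) :=
  fun _ hs _ ht hst =>
    Circle.exp_injOn_Ico (by simp) hs ht (Circle.ext (by simpa [Circle.coe_exp] using hst))

theorem stmt0_general (k : ℕ) (hk : 1 ≤ k) (θ : Fin k → ℝ)
    (hθmem : ∀ j, θ j ∈ Set.Ico 0 (2 * Real.pi)) (hθinj : Function.Injective θ)
    (m : Fin k → ℕ)
    (α : ℕ → ℂ) :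
    (∃ β : Fin k → ℕ → ℂ,
        (∀ n, α n = ∑ j, β j n) ∧
        (∀ j, Summable (fun n =>
          ‖applyPoly ((Polynomial.X - Polynomial.C (Complex.exp (θ j * Complex.I))) ^ m j)
              (β j) n‖ ^ (2 : ℕ))) ∧
        (∀ j, Summable (fun n => ‖β j n‖ ^ (2 * m j + 2)))) ↔
      (Summable (fun n =>
          ‖applyPoly (∏ j, (Polynomial.X - Polynomial.C (Complex.exp (θ j * Complex.I))) ^ m j)
              α n‖ ^ (2 : ℕ)) ∧
        ∀ q : Fin k, Summable (fun n =>
          ‖applyPoly (∏ j ∈ Finset.univ.erase q,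
              (Polynomial.X - Polynomial.C (Complex.exp (θ j * Complex.I))) ^ m j)
              α n‖ ^ (2 * m q + 2))) := by
  have : Nonempty (Fin k) := ⟨⟨0, hk⟩⟩
  have hcop : Pairwise (IsCoprime on fun j => (X - C (Complex.exp (θ j * Complex.I))) ^ m j) :=
    fun i j hij => (pairwise_coprime_X_sub_C
      (fun i j h => hθinj (Complex.injOn_exp_mul_I (hθmem i) (hθmem j) h)) hij).pow
  have hdecomp := Module.End.exists_sum_eq_aeval_mem_iff hcop
    (memℓpSubmodule_mem_invtSubmodule_shift ℂ (2 : ℕ))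
    (fun j => memℓpSubmodule_mem_invtSubmodule_shift ℂ (2 * m j + 2 : ℕ))
    (fun j => memℓpSubmodule_mono ℂ (Nat.cast_le.mpr (by omega))) α
  simp only [summable_norm_pow_iff_memℓp two_ne_zero, summable_norm_pow_iff_memℓp
    (Nat.succ_ne_zero _), applyPoly_eq_aeval_shift, ← funext_iff, ← Finset.sum_fn]
  exact hdecomp

theorem stmt0 (k : ℕ) (hk : 1 ≤ k) (θ : Fin k → ℝ)
    (hθmem : ∀ j, θ j ∈ Set.Ico 0 (2 * Real.pi)) (hθinj : Function.Injective θ)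
    (m : Fin k → ℕ) (hm : ∀ j, 1 ≤ m j)
    (α : ℕ → ℂ) (hbdd : ∃ C : ℝ, ∀ n, ‖α n‖ ≤ C) :
    (∃ β : Fin k → ℕ → ℂ,
        (∀ n, α n = ∑ j, β j n) ∧
        (∀ j, Summable (fun n =>
          ‖applyPoly ((Polynomial.X - Polynomial.C (Complex.exp (θ j * Complex.I))) ^ m j)
              (β j) n‖ ^ (2 : ℕ))) ∧
        (∀ j, Summable (fun n => ‖β j n‖ ^ (2 * m j + 2)))) ↔
      (Summable (fun n =>
          ‖applyPoly (∏ j, (Polynomial.X - Polynomial.C (Complex.exp (θ j * Complex.I))) ^ m j)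
              α n‖ ^ (2 : ℕ)) ∧
        ∀ q : Fin k, Summable (fun n =>
          ‖applyPoly (∏ j ∈ Finset.univ.erase q,
              (Polynomial.X - Polynomial.C (Complex.exp (θ j * Complex.I))) ^ m j)
              α n‖ ^ (2 * m q + 2))) :=
  stmt0_general k hk θ hθmem hθinj m α
end

section
/- Let θ₁,…,θ_k ∈ [0,2π) be distinct, let m₁,…,m_k be strictly positive integers, set m = max_{1≤j≤k} m_j, and let α = (α_n)_{n≥0} be a bounded sequence of complex numbers. Then the following two sets of conditions are equivalent. (L₁): there exist sequences β⁽¹⁾,…,β⁽ᵏ⁾ of complex numbers with α = β⁽¹⁾ + ⋯ + β⁽ᵏ⁾ such that for each j, (S − e^{iθ_j})^{m_j} β⁽ʲ⁾ ∈ ℓ² and β⁽ʲ⁾ ∈ ℓ^{2m_j+2}. (L₃): ∏_{j=1}^{k}(S − e^{iθ_j})^{m_j} α ∈ ℓ²; for each q ∈ {1,…,k} with m_q < m, ∏_{j≠q}(S − e^{iθ_j})^{m_j} α ∈ ℓ^{2m_q+2}; and α ∈ ℓ^{2m+2}. -/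
open scoped BigOperators

/-!
Write `s_j = (X - e^{iθ_j})^{m_j}`. Every polynomial in `S` preserves each `ℓ^p`, and
`ℓ² ⊆ ℓ^p` for `p ≥ 2`; applying `∏_{i ≠ q} s_i(S)` to `α = ∑ β_j` then gives (L₃).
Conversely the `s_j` are pairwise coprime, so Bézout gives `μ_j` with
`∑_j μ_j ∏_{i ≠ j} s_i = 1`, and `β_j = (μ_j ∏_{i ≠ j} s_i)(S) α` decomposes `α`:
`s_j(S) β_j = μ_j(S) (∏_i s_i)(S) α ∈ ℓ²`, and `β_j ∈ ℓ^{2m_j+2}` because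
`(∏_{i ≠ j} s_i)(S) α` is, by hypothesis when `m_j < m` and since `α ∈ ℓ^{2m+2}` when `m_j = m`.
-/

open Polynomial Finset
open scoped ENNReal

theorem Memℓp.comp_add_right {E : Type*} [NormedAddCommGroup E] {p : ℝ≥0∞} {f : ℕ → E}
    (hf : Memℓp f p) (ℓ : ℕ) : Memℓp (fun n => f (n + ℓ)) p := by
  rcases p.trichotomy with rfl | rfl | hp
  · exact memℓp_zero (hf.finite_dsupport.preimage (add_left_injective ℓ).injOn)
  · exact memℓp_infty (hf.bddAbove.mono (Set.range_comp_subset_range (· + ℓ) fun n => ‖f n‖))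
  · exact memℓp_gen ((summable_nat_add_iff ℓ).2 (hf.summable hp))

theorem memℓp_natCast_iff {α : Type*} {E : α → Type*} [∀ i, NormedAddCommGroup (E i)]
    {f : ∀ i, E i} {p : ℕ} [NeZero p] : Memℓp f p ↔ Summable fun i => ‖f i‖ ^ p := by
  rw [memℓp_gen_iff (by simpa using Nat.pos_of_neZero p)]
  simp only [ENNReal.toReal_natCast, Real.rpow_natCast]

theorem Memℓp.sum {α E ι : Type*} [NormedAddCommGroup E] {p : ℝ≥0∞} (t : Finset ι)
    {f : ι → α → E} (hf : ∀ i ∈ t, Memℓp (f i) p) : Memℓp (∑ i ∈ t, f i) p := by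
  rw [Finset.sum_fn]
  exact Memℓp.finsetSum t hf

section SeqShift

variable {𝕜 : Type*} [NormedCommRing 𝕜]

variable (𝕜) in
noncomputable def seqShift : Module.End 𝕜 (ℕ → 𝕜) := LinearMap.funLeft 𝕜 𝕜 (· + 1)

theorem seqShift_pow_apply (ℓ : ℕ) (a : ℕ → 𝕜) (n : ℕ) : (seqShift 𝕜 ^ ℓ) a n = a (n + ℓ) := by
  induction ℓ generalizing a with
  | zero => rfl
  | succ ℓ ih =>
    rw [pow_succ, Module.End.mul_apply, ih]
    rfl

theorem Memℓp.aeval_seqShift {p : ℝ≥0∞} {a : ℕ → 𝕜} (ha : Memℓp a p) (P : 𝕜[X]) :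
    Memℓp (aeval (seqShift 𝕜) P a) p := by
  induction P using Polynomial.induction_on' with
  | add P Q hP hQ => simpa only [map_add, LinearMap.add_apply] using hP.add hQ
  | monomial ℓ c =>
    have hshift : (seqShift 𝕜 ^ ℓ) a = fun n => a (n + ℓ) := funext (seqShift_pow_apply ℓ a)
    rw [aeval_monomial, Module.End.mul_apply, Module.algebraMap_end_apply, hshift]
    exact (ha.comp_add_right ℓ).const_smul c

variable {ι : Type*} [DecidableEq ι] {s : ι → 𝕜[X]} {r : ℝ≥0∞}

theorem Memℓp.aeval_seqShift_prod {t : Finset ι} {j : ι} (hj : j ∈ t) {a : ℕ → 𝕜}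
    (ha : Memℓp (aeval (seqShift 𝕜) (s j) a) r) :
    Memℓp (aeval (seqShift 𝕜) (∏ i ∈ t, s i) a) r := by
  rw [← mul_prod_erase t s hj, mul_comm, map_mul, Module.End.mul_apply]
  exact ha.aeval_seqShift _

theorem memℓp_aeval_seqShift_of_eq_sum [Fintype ι] {p : ι → ℝ≥0∞} (hrp : ∀ j, r ≤ p j)
    {a : ℕ → 𝕜} {β : ι → ℕ → 𝕜} (hβ : a = ∑ j, β j)
    (hβr : ∀ j, Memℓp (aeval (seqShift 𝕜) (s j) (β j)) r) (hβp : ∀ j, Memℓp (β j) (p j)) :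
    Memℓp (aeval (seqShift 𝕜) (∏ j, s j) a) r ∧
      ∀ q, Memℓp (aeval (seqShift 𝕜) (∏ j ∈ univ.erase q, s j) a) (p q) := by
  subst hβ
  simp only [map_sum]
  refine ⟨Memℓp.sum _ fun j _ => (hβr j).aeval_seqShift_prod (mem_univ j),
    fun q => Memℓp.sum _ fun j _ => ?_⟩
  by_cases hjq : j = q
  · subst hjq
    exact (hβp j).aeval_seqShift _
  · exact ((hβr j).aeval_seqShift_prod (mem_erase.2 ⟨hjq, mem_univ j⟩)).of_exponent_ge (hrp q)

theorem exists_eq_sum_of_memℓp_aeval_seqShift [Fintype ι] [Nonempty ι]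
    (hs : Pairwise (Function.onFun IsCoprime s))
    {p : ι → ℝ≥0∞} {a : ℕ → 𝕜} (ha : Memℓp (aeval (seqShift 𝕜) (∏ j, s j) a) r)
    (hap : ∀ q, Memℓp (aeval (seqShift 𝕜) (∏ j ∈ univ.erase q, s j) a) (p q)) :
    ∃ β : ι → ℕ → 𝕜, a = ∑ j, β j ∧
      (∀ j, Memℓp (aeval (seqShift 𝕜) (s j) (β j)) r) ∧ ∀ j, Memℓp (β j) (p j) := by
  obtain ⟨μ, hμ⟩ := exists_sum_eq_one_iff_pairwise_coprime'.2 hs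
  simp only [compl_singleton] at hμ
  refine ⟨fun j => aeval (seqShift 𝕜) (μ j * ∏ i ∈ univ.erase j, s i) a, ?_, fun j => ?_,
    fun j => ?_⟩ <;> dsimp only
  · simp only [← LinearMap.sum_apply, ← map_sum, hμ, map_one, Module.End.one_apply]
  · rw [← Module.End.mul_apply, ← map_mul, mul_left_comm, mul_prod_erase _ _ (mem_univ j),
      map_mul, Module.End.mul_apply]
    exact ha.aeval_seqShift _
  · rw [map_mul, Module.End.mul_apply]
    exact (hap j).aeval_seqShift _

end SeqShift

theorem applyPoly_eq_aeval (P : ℂ[X]) : applyPoly P = aeval (seqShift ℂ) P := by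
  funext a n
  rw [aeval_eq_sum_range, LinearMap.sum_apply]
  simp [applyPoly, seqShift_pow_apply]

theorem stmt1_general (k : ℕ) (hk : 1 ≤ k) (θ : Fin k → ℝ)
    (hθmem : ∀ j, θ j ∈ Set.Ico 0 (2 * Real.pi)) (hθinj : Function.Injective θ)
    (m : Fin k → ℕ)
    (α : ℕ → ℂ) :
    (∃ β : Fin k → ℕ → ℂ,
        (∀ n, α n = ∑ j, β j n) ∧
        (∀ j, Summable (fun n =>
          ‖applyPoly ((Polynomial.X - Polynomial.C (Complex.exp (θ j * Complex.I))) ^ m j)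
              (β j) n‖ ^ (2 : ℕ))) ∧
        (∀ j, Summable (fun n => ‖β j n‖ ^ (2 * m j + 2)))) ↔
      (Summable (fun n =>
          ‖applyPoly (∏ j, (Polynomial.X - Polynomial.C (Complex.exp (θ j * Complex.I))) ^ m j)
              α n‖ ^ (2 : ℕ)) ∧
        (∀ q : Fin k, m q < Finset.univ.sup m → Summable (fun n =>
          ‖applyPoly (∏ j ∈ Finset.univ.erase q,
              (Polynomial.X - Polynomial.C (Complex.exp (θ j * Complex.I))) ^ m j)
              α n‖ ^ (2 * m q + 2))) ∧
        Summable (fun n => ‖α n‖ ^ (2 * Finset.univ.sup m + 2))) := by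
  have : Nonempty (Fin k) := ⟨⟨0, hk⟩⟩
  have hinj : Function.Injective fun j => Complex.exp (θ j * Complex.I) := fun i j h =>
    hθinj (Circle.exp_injOn_Ico (by simp) (hθmem i) (hθmem j) (Subtype.ext h))
  have hcop : Pairwise (Function.onFun IsCoprime
      fun j => (X - C (Complex.exp (θ j * Complex.I))) ^ m j) :=
    fun i j hij => (pairwise_coprime_X_sub_C hinj hij).pow
  simp only [applyPoly_eq_aeval, ← memℓp_natCast_iff, Nat.cast_ofNat, ← Finset.sum_apply,
    ← funext_iff]
  constructor
  · rintro ⟨β, hαβ, hβ2, hβp⟩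
    have h2p : ∀ j, (2 : ℝ≥0∞) ≤ (2 * m j + 2 : ℕ) := fun j => by norm_cast; omega
    obtain ⟨h2, hq⟩ := memℓp_aeval_seqShift_of_eq_sum h2p hαβ hβ2 hβp
    refine ⟨h2, fun q _ => hq q, hαβ ▸ Memℓp.sum _ fun j _ => (hβp j).of_exponent_ge ?_⟩
    have hmj := le_sup (f := m) (mem_univ j)
    norm_cast
    omega
  · rintro ⟨h2, hlt, hα⟩
    refine exists_eq_sum_of_memℓp_aeval_seqShift hcop h2 fun q => ?_
    rcases (le_sup (f := m) (mem_univ q)).lt_or_eq with h | h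
    · exact hlt q h
    · rw [h]
      exact hα.aeval_seqShift _

theorem stmt1 (k : ℕ) (hk : 1 ≤ k) (θ : Fin k → ℝ)
    (hθmem : ∀ j, θ j ∈ Set.Ico 0 (2 * Real.pi)) (hθinj : Function.Injective θ)
    (m : Fin k → ℕ) (hm : ∀ j, 1 ≤ m j)
    (α : ℕ → ℂ) (hbdd : ∃ C : ℝ, ∀ n, ‖α n‖ ≤ C) :
    (∃ β : Fin k → ℕ → ℂ,
        (∀ n, α n = ∑ j, β j n) ∧
        (∀ j, Summable (fun n =>
          ‖applyPoly ((Polynomial.X - Polynomial.C (Complex.exp (θ j * Complex.I))) ^ m j)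
              (β j) n‖ ^ (2 : ℕ))) ∧
        (∀ j, Summable (fun n => ‖β j n‖ ^ (2 * m j + 2)))) ↔
      (Summable (fun n =>
          ‖applyPoly (∏ j, (Polynomial.X - Polynomial.C (Complex.exp (θ j * Complex.I))) ^ m j)
              α n‖ ^ (2 : ℕ)) ∧
        (∀ q : Fin k, m q < Finset.univ.sup m → Summable (fun n =>
          ‖applyPoly (∏ j ∈ Finset.univ.erase q,
              (Polynomial.X - Polynomial.C (Complex.exp (θ j * Complex.I))) ^ m j)
              α n‖ ^ (2 * m q + 2))) ∧
        Summable (fun n => ‖α n‖ ^ (2 * Finset.univ.sup m + 2))) :=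
  stmt1_general k hk θ hθmem hθinj m α
end

section
/- For every finitely supported sequence α = (α_n)_{n∈ℤ} of complex numbers, ‖(S−1)α‖₃² ≤ 2 ‖(S−1)²α‖₂ ‖α‖₆, i.e. (∑_{n∈ℤ} |α_{n+1} − α_n|³)^{2/3} ≤ 2 (∑_{n∈ℤ} |α_{n+2} − 2α_{n+1} + α_n|²)^{1/2} (∑_{n∈ℤ} |α_n|⁶)^{1/6}. -/
/-!
Write `b = Δα` and `c = Δb = Δ²α`. Pairing `b` with `g = |b| b̄` gives `∑ |b|³ = ∑ b g`, and
summation by parts moves the difference onto `g`: `∑ |b|³ = -∑ α(n+1) (g(n+1) - g(n))`. The map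
`z ↦ |z| z̄` satisfies `|g(n+1) - g(n)| ≤ (|b(n+1)| + |b(n)|) |c(n)|`, so Hölder's inequality with
exponents `6, 3, 2` and Minkowski's inequality for `|Sb| + |b|` give
`‖b‖₃³ ≤ 2 ‖α‖₆ ‖b‖₃ ‖c‖₂`; dividing by `‖b‖₃` proves the claim.
-/

open Function ComplexConjugate
open scoped fwdDiff

namespace RCLike

variable {𝕜 : Type*} [RCLike 𝕜]

lemma mul_norm_mul_conj (z : 𝕜) : z * (‖z‖ * conj z) = ((‖z‖ ^ 3 : ℝ) : 𝕜) := by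
  rw [mul_left_comm, mul_conj]
  push_cast
  ring

lemma norm_norm_mul_conj_sub_le (x y : 𝕜) :
    ‖(‖x‖ : 𝕜) * conj x - ‖y‖ * conj y‖ ≤ (‖x‖ + ‖y‖) * ‖x - y‖ := by
  have hsplit : (‖x‖ : 𝕜) * conj x - ‖y‖ * conj y
      = ‖x‖ * conj (x - y) + ((‖x‖ - ‖y‖ : ℝ) : 𝕜) * conj y := by
    rw [map_sub]
    push_cast
    ring
  calc ‖(‖x‖ : 𝕜) * conj x - ‖y‖ * conj y‖
      ≤ ‖x‖ * ‖x - y‖ + |‖x‖ - ‖y‖| * ‖y‖ := by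
        rw [hsplit]
        refine (norm_add_le _ _).trans_eq ?_
        simp only [norm_mul, norm_conj, norm_ofReal, abs_norm]
    _ ≤ ‖x‖ * ‖x - y‖ + ‖x - y‖ * ‖y‖ := by gcongr; exact abs_norm_sub_norm_le x y
    _ = (‖x‖ + ‖y‖) * ‖x - y‖ := by ring

end RCLike

lemma Function.HasFiniteSupport.comp_add_right {M E : Type*} [Add M] [IsRightCancelAdd M]
    [Zero E] {x : M → E} (hx : x.HasFiniteSupport) (h : M) :
    (fun n => x (n + h)).HasFiniteSupport :=
  hx.fun_comp_of_injective (add_left_injective h)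

lemma Function.HasFiniteSupport.fwdDiff {M G : Type*} [AddCommMonoid M] [IsRightCancelAdd M]
    [AddCommGroup G] {x : M → G} (hx : x.HasFiniteSupport) (h : M) : (Δ_[h] x).HasFiniteSupport :=
  (hx.comp_add_right h).sub hx

lemma Function.HasFiniteSupport.summable_norm_rpow {ι E : Type*} [NormedAddCommGroup E]
    {x : ι → E} (hx : x.HasFiniteSupport) {p : ℝ} (hp : p ≠ 0) : Summable fun i => ‖x i‖ ^ p :=
  summable_of_hasFiniteSupport (hx.fun_comp (g := fun z => ‖z‖ ^ p) (by simp [hp]))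

lemma tsum_comp_add_right {M E : Type*} [AddGroup M] [AddCommMonoid E] [TopologicalSpace E]
    (f : M → E) (h : M) : ∑' n, f (n + h) = ∑' n, f n :=
  (Equiv.addRight h).tsum_eq f

lemma summable_comp_add_right_iff {M E : Type*} [AddGroup M] [AddCommMonoid E]
    [TopologicalSpace E] (f : M → E) (h : M) : (Summable fun n => f (n + h)) ↔ Summable f :=
  (Equiv.addRight h).summable_iff

theorem tsum_fwdDiff_mul_eq_neg_tsum_mul_fwdDiff {R : Type*} [Ring R] [TopologicalSpace R]
    [IsTopologicalAddGroup R] [T2Space R] (a g : ℤ → R) (hg : g.HasFiniteSupport) :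
    ∑' n, Δ_[1] a n * g n = -∑' n, a (n + 1) * Δ_[1] g n := by
  have h₁ : Summable fun n => a (n + 1) * g n :=
    summable_of_hasFiniteSupport (HasFiniteSupport.mul_right _ hg)
  have h₂ : Summable fun n => a n * g n :=
    summable_of_hasFiniteSupport (HasFiniteSupport.mul_right _ hg)
  have h₃ : Summable fun n => a (n + 1) * g (n + 1) :=
    summable_of_hasFiniteSupport (HasFiniteSupport.mul_right _ (hg.comp_add_right 1))
  calc ∑' n, Δ_[1] a n * g n = ∑' n, a (n + 1) * g n - ∑' n, a n * g n := by
        simp only [fwdDiff, sub_mul]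
        exact h₁.tsum_sub h₂
    _ = ∑' n, a (n + 1) * g n - ∑' n, a (n + 1) * g (n + 1) := by
        rw [tsum_comp_add_right (fun n => a n * g n)]
    _ = -∑' n, a (n + 1) * Δ_[1] g n := by
        rw [← h₁.tsum_sub h₃, ← tsum_neg]
        simp only [fwdDiff, mul_sub, neg_sub]

theorem tsum_norm_fwdDiff_pow_three_le {𝕜 : Type*} [RCLike 𝕜] (x : ℤ → 𝕜)
    (hx : x.HasFiniteSupport) :
    ∑' n, ‖Δ_[1] x n‖ ^ 3 ≤
      ∑' n, ‖x (n + 1)‖ * (‖Δ_[1] x (n + 1)‖ + ‖Δ_[1] x n‖) * ‖Δ_[1] (Δ_[1] x) n‖ := by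
  set b := Δ_[1] x
  set g : ℤ → 𝕜 := fun n => ‖b n‖ * conj (b n)
  have hb : b.HasFiniteSupport := hx.fwdDiff 1
  have hg : g.HasFiniteSupport := hb.fun_comp (g := fun z : 𝕜 => ‖z‖ * conj z) (by simp)
  have hsum : Summable fun n => ‖x (n + 1) * Δ_[1] g n‖ :=
    summable_of_hasFiniteSupport ((HasFiniteSupport.mul_right _ (hg.fwdDiff 1)).fun_comp norm_zero)
  have hcube : ((∑' n, ‖b n‖ ^ 3 : ℝ) : 𝕜) = -∑' n, x (n + 1) * Δ_[1] g n := by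
    rw [RCLike.ofReal_tsum, ← tsum_fwdDiff_mul_eq_neg_tsum_mul_fwdDiff x g hg]
    exact tsum_congr fun n => (RCLike.mul_norm_mul_conj (b n)).symm
  calc ∑' n, ‖b n‖ ^ 3 = ‖∑' n, x (n + 1) * Δ_[1] g n‖ := by
        rw [← norm_neg, ← hcube, RCLike.norm_ofReal,
          abs_of_nonneg (tsum_nonneg fun n => by positivity)]
    _ ≤ ∑' n, ‖x (n + 1) * Δ_[1] g n‖ := norm_tsum_le_tsum_norm hsum
    _ ≤ ∑' n, ‖x (n + 1)‖ * (‖b (n + 1)‖ + ‖b n‖) * ‖Δ_[1] b n‖ := by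
        refine Summable.tsum_le_tsum (fun n => ?_) hsum (summable_of_hasFiniteSupport ?_)
        · rw [norm_mul, mul_assoc]
          gcongr
          exact RCLike.norm_norm_mul_conj_sub_le (b (n + 1)) (b n)
        · exact HasFiniteSupport.mul_left
            (HasFiniteSupport.mul_left ((hx.comp_add_right 1).fun_comp norm_zero) _) _

theorem Real.tsum_mul_mul_le_Lp_mul_Lq_mul_Lr_of_nonneg {ι : Type*} {p q r s : ℝ}
    (hpqs : p.HolderTriple q s) (hsr : s.HolderConjugate r) {f g h : ι → ℝ}
    (hf : ∀ i, 0 ≤ f i) (hg : ∀ i, 0 ≤ g i) (hh : ∀ i, 0 ≤ h i)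
    (hf_sum : Summable fun i => f i ^ p) (hg_sum : Summable fun i => g i ^ q)
    (hh_sum : Summable fun i => h i ^ r) :
    ∑' i, f i * g i * h i ≤
      (∑' i, f i ^ p) ^ (1 / p) * (∑' i, g i ^ q) ^ (1 / q) * (∑' i, h i ^ r) ^ (1 / r) := by
  calc ∑' i, f i * g i * h i
      ≤ (∑' i, (f i * g i) ^ s) ^ (1 / s) * (∑' i, h i ^ r) ^ (1 / r) :=
        Real.inner_le_Lp_mul_Lq_tsum_of_nonneg hsr (fun i => mul_nonneg (hf i) (hg i)) hh
          (Real.summable_Lr_of_Lp_Lq_of_nonneg hpqs hf hg hf_sum hg_sum) hh_sum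
    _ ≤ _ := mul_le_mul_of_nonneg_right
        (Real.Lr_le_Lp_mul_Lq_tsum_of_nonneg hpqs hf hg hf_sum hg_sum)
        (Real.rpow_nonneg (tsum_nonneg fun i => Real.rpow_nonneg (hh i) r) _)

theorem Real.Lp_shift_add_le_tsum_of_nonneg {y : ℤ → ℝ} (hy : ∀ n, 0 ≤ y n) {p : ℝ}
    (hp : 1 ≤ p) (hy_sum : Summable fun n => y n ^ p) :
    (Summable fun n => (y (n + 1) + y n) ^ p) ∧
      (∑' n, (y (n + 1) + y n) ^ p) ^ (1 / p) ≤ 2 * (∑' n, y n ^ p) ^ (1 / p) := by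
  have hmink := Real.Lp_add_le_tsum_of_nonneg hp (fun n => hy (n + 1)) hy
    ((summable_comp_add_right_iff (fun n => y n ^ p) 1).mpr hy_sum) hy_sum
  rwa [tsum_comp_add_right (fun n => y n ^ p), ← two_mul] at hmink

theorem Real.tsum_shift_mul_shift_add_mul_le {p q r s : ℝ}
    (hpqs : p.HolderTriple q s) (hsr : s.HolderConjugate r) {u y z : ℤ → ℝ}
    (hu : ∀ n, 0 ≤ u n) (hy : ∀ n, 0 ≤ y n) (hz : ∀ n, 0 ≤ z n)
    (hu_sum : Summable fun n => u n ^ p) (hy_sum : Summable fun n => y n ^ q)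
    (hz_sum : Summable fun n => z n ^ r) :
    ∑' n, u (n + 1) * (y (n + 1) + y n) * z n ≤
      2 * (∑' n, u n ^ p) ^ (1 / p) * (∑' n, y n ^ q) ^ (1 / q) * (∑' n, z n ^ r) ^ (1 / r) := by
  obtain ⟨hyy_sum, hyy⟩ :=
    Real.Lp_shift_add_le_tsum_of_nonneg hy (hsr.lt.trans hpqs.symm.lt).le hy_sum
  calc ∑' n, u (n + 1) * (y (n + 1) + y n) * z n
      ≤ (∑' n, u (n + 1) ^ p) ^ (1 / p) * (∑' n, (y (n + 1) + y n) ^ q) ^ (1 / q) *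
          (∑' n, z n ^ r) ^ (1 / r) :=
        Real.tsum_mul_mul_le_Lp_mul_Lq_mul_Lr_of_nonneg hpqs hsr (fun n => hu (n + 1))
          (fun n => add_nonneg (hy (n + 1)) (hy n)) hz
          ((summable_comp_add_right_iff (fun n => u n ^ p) 1).mpr hu_sum) hyy_sum hz_sum
    _ ≤ (∑' n, u n ^ p) ^ (1 / p) * (2 * (∑' n, y n ^ q) ^ (1 / q)) *
          (∑' n, z n ^ r) ^ (1 / r) := by
        rw [tsum_comp_add_right (fun n => u n ^ p)]
        gcongr
        · exact Real.rpow_nonneg (tsum_nonneg fun n => Real.rpow_nonneg (hz n) r) _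
        · exact Real.rpow_nonneg (tsum_nonneg fun n => Real.rpow_nonneg (hu n) p) _
    _ = 2 * (∑' n, u n ^ p) ^ (1 / p) * (∑' n, y n ^ q) ^ (1 / q) *
          (∑' n, z n ^ r) ^ (1 / r) := by ring

theorem Real.rpow_le_of_le_mul_rpow {B K s t : ℝ} (hst : s + t = 1) (hs : 0 < s) (hB : 0 ≤ B)
    (hK : 0 ≤ K) (h : B ≤ K * B ^ t) : B ^ s ≤ K := by
  rcases hB.eq_or_lt with rfl | hB
  · rwa [Real.zero_rpow hs.ne']
  · refine le_of_mul_le_mul_right ?_ (Real.rpow_pos_of_pos hB t)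
    rwa [← Real.rpow_add hB, hst, Real.rpow_one]

theorem stmt2 (α : ℤ → ℂ) (hfin : {n : ℤ | α n ≠ 0}.Finite) :
    (∑' n : ℤ, ‖α (n + 1) - α n‖ ^ (3 : ℕ)) ^ ((2 : ℝ) / 3) ≤
      2 * (∑' n : ℤ, ‖α (n + 2) - 2 * α (n + 1) + α n‖ ^ (2 : ℕ)) ^ ((1 : ℝ) / 2) *
        (∑' n : ℤ, ‖α n‖ ^ (6 : ℕ)) ^ ((1 : ℝ) / 6) := by
  have hα : α.HasFiniteSupport := hfin
  have hΔ2 : ∀ n, α (n + 2) - 2 * α (n + 1) + α n = Δ_[1] (Δ_[1] α) n := fun n => by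
    simp only [fwdDiff]
    ring_nf
  have hΔ : ∀ n, α (n + 1) - α n = Δ_[1] α n := fun n => rfl
  simp only [hΔ2, hΔ]
  have hholder := Real.tsum_shift_mul_shift_add_mul_le (p := 6) (q := 3) (r := 2) (s := 2)
    ⟨by norm_num, by norm_num, by norm_num⟩ .two_two (fun n => norm_nonneg (α n))
    (fun n => norm_nonneg (Δ_[1] α n)) (fun n => norm_nonneg (Δ_[1] (Δ_[1] α) n))
    (hα.summable_norm_rpow (by norm_num)) ((hα.fwdDiff 1).summable_norm_rpow (by norm_num))
    (((hα.fwdDiff 1).fwdDiff 1).summable_norm_rpow (by norm_num))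
  simp only [Real.rpow_ofNat] at hholder
  refine Real.rpow_le_of_le_mul_rpow (t := 1 / 3) (by norm_num) (by norm_num)
    (tsum_nonneg fun n => by positivity) (by positivity) ?_
  calc ∑' n, ‖Δ_[1] α n‖ ^ 3
      ≤ ∑' n, ‖α (n + 1)‖ * (‖Δ_[1] α (n + 1)‖ + ‖Δ_[1] α n‖) * ‖Δ_[1] (Δ_[1] α) n‖ :=
        tsum_norm_fwdDiff_pow_three_le α hα
    _ ≤ _ := hholder
    _ = _ := by ring
end

section
/- Let α = (α_n)_{n∈ℤ} be a sequence of complex numbers with ∑_{n∈ℤ} |α_n|⁶ < ∞ and ∑_{n∈ℤ} |α_{n+2} − 2α_{n+1} + α_n|² < ∞. Then ∑_{n∈ℤ} |α_{n+1} − α_n|³ < ∞ and ‖(S−1)α‖₃² ≤ 2 ‖(S−1)²α‖₂ ‖α‖₆, i.e. (∑_{n∈ℤ} |α_{n+1} − α_n|³)^{2/3} ≤ 2 (∑_{n∈ℤ} |α_{n+2} − 2α_{n+1} + α_n|²)^{1/2} (∑_{n∈ℤ} |α_n|⁶)^{1/6}. -/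
open scoped BigOperators

open Finset Filter Topology fwdDiff RealInnerProductSpace

/-!
Write `b = Δα` and `c = Δb`. Since `⟪b, ‖b‖ • b⟫ = ‖b‖³`, summation by parts over a window
`[M, N]` turns `S = ∑ ‖bₙ‖³` into boundary terms plus `∑ ⟪αₙ₊₁, Δ(‖b‖ • b)ₙ⟫`, and
`‖Δ(‖b‖ • b)ₙ‖ ≤ (‖bₙ₊₁‖ + ‖bₙ‖) ‖cₙ‖`. Hölder with exponents `6, 3, 2` bounds that sum by
`2 ‖α‖₆ ‖c‖₂ S^{1/3}`, whence `S^{2/3} ≤ 2 ‖α‖₆ ‖c‖₂ + (boundary)^{2/3}`. As `α ∈ ℓ⁶` tends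
to `0`, the boundary terms vanish when the window `[-N, N]` grows, which gives both the
summability and the bound.
-/

theorem sum_Ico_fwdDiff_int {G : Type*} [AddCommGroup G] (f : ℤ → G) {M N : ℤ}
    (h : M ≤ N) : ∑ n ∈ Ico M N, Δ_[1] f n = f N - f M := by
  induction N, h using Int.leInduction with
  | base => simp
  | succ N hMN ih =>
    rw [← insert_Ico_right_eq_Ico_add_one hMN, sum_insert (by simp), ih, fwdDiff]
    abel

theorem norm_norm_smul_sub_norm_smul_le {E : Type*} [SeminormedAddCommGroup E] [NormedSpace ℝ E]
    (z w : E) : ‖‖z‖ • z - ‖w‖ • w‖ ≤ (‖z‖ + ‖w‖) * ‖z - w‖ := by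
  have split : ‖z‖ • z - ‖w‖ • w = ‖z‖ • (z - w) + (‖z‖ - ‖w‖) • w := by
    rw [smul_sub, sub_smul]; abel
  calc ‖‖z‖ • z - ‖w‖ • w‖ ≤ ‖z‖ * ‖z - w‖ + |‖z‖ - ‖w‖| * ‖w‖ := by
        rw [split]
        refine (norm_add_le _ _).trans ?_
        rw [norm_smul, norm_smul, Real.norm_of_nonneg (norm_nonneg z), Real.norm_eq_abs]
    _ ≤ ‖z‖ * ‖z - w‖ + ‖z - w‖ * ‖w‖ := by
        gcongr; exact abs_norm_sub_norm_le z w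
    _ = (‖z‖ + ‖w‖) * ‖z - w‖ := by ring

theorem sum_mul_mul_le_of_sum_pow_le {ι : Type*} (s : Finset ι) {x y z : ι → ℝ}
    (hx : ∀ i, 0 ≤ x i) (hy : ∀ i, 0 ≤ y i) (hz : ∀ i, 0 ≤ z i) {X Y Z : ℝ}
    (hX : ∑ i ∈ s, x i ^ 6 ≤ X) (hY : ∑ i ∈ s, y i ^ 3 ≤ Y) (hZ : ∑ i ∈ s, z i ^ 2 ≤ Z) :
    ∑ i ∈ s, x i * y i * z i ≤ X ^ (1 / 6 : ℝ) * Y ^ (1 / 3 : ℝ) * Z ^ (1 / 2 : ℝ) := by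
  have hxy := Real.Lr_rpow_le_Lp_mul_Lq_of_nonneg s (f := x) (g := y) (p := 6) (q := 3) (r := 2)
    ⟨by norm_num, by norm_num, by norm_num⟩ (fun i _ => hx i) (fun i _ => hy i)
  have hxyz := Real.inner_le_Lp_mul_Lq_of_nonneg s (f := fun i => x i * y i) (g := z)
    (p := 2) (q := 2) ⟨by norm_num, by norm_num, by norm_num⟩
    (fun i _ => mul_nonneg (hx i) (hy i)) (fun i _ => hz i)
  simp only [Real.rpow_ofNat] at hxy hxyz
  have hx6 : 0 ≤ ∑ i ∈ s, x i ^ 6 := sum_nonneg fun i _ => by positivity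
  have hy3 : 0 ≤ ∑ i ∈ s, y i ^ 3 := sum_nonneg fun i _ => pow_nonneg (hy i) 3
  have hz2 : 0 ≤ ∑ i ∈ s, z i ^ 2 := sum_nonneg fun i _ => sq_nonneg _
  calc ∑ i ∈ s, x i * y i * z i
      ≤ ((∑ i ∈ s, x i ^ 6) ^ (2 / 6 : ℝ) * (∑ i ∈ s, y i ^ 3) ^ (2 / 3 : ℝ)) ^ (1 / 2 : ℝ) *
          (∑ i ∈ s, z i ^ 2) ^ (1 / 2 : ℝ) := by
        refine hxyz.trans (mul_le_mul_of_nonneg_right ?_ (Real.rpow_nonneg hz2 _))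
        exact Real.rpow_le_rpow (sum_nonneg fun i _ => sq_nonneg _) hxy (by norm_num)
    _ = (∑ i ∈ s, x i ^ 6) ^ (1 / 6 : ℝ) * (∑ i ∈ s, y i ^ 3) ^ (1 / 3 : ℝ) *
          (∑ i ∈ s, z i ^ 2) ^ (1 / 2 : ℝ) := by
        rw [Real.mul_rpow (by positivity) (by positivity), ← Real.rpow_mul hx6,
          ← Real.rpow_mul hy3]
        norm_num
    _ ≤ X ^ (1 / 6 : ℝ) * Y ^ (1 / 3 : ℝ) * Z ^ (1 / 2 : ℝ) := by
        have hX0 := Real.rpow_nonneg (hx6.trans hX) (1 / 6)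
        have hY0 := Real.rpow_nonneg (hy3.trans hY) (1 / 3)
        gcongr

theorem rpow_two_thirds_le_of_le_add_mul_rpow_one_third {S ε D : ℝ} (hS : 0 ≤ S) (hε : 0 ≤ ε)
    (hD : 0 ≤ D) (h : S ≤ ε + D * S ^ (1 / 3 : ℝ)) :
    S ^ (2 / 3 : ℝ) ≤ D + ε ^ (2 / 3 : ℝ) := by
  have cube {t : ℝ} (ht : 0 ≤ t) : (t ^ (1 / 3 : ℝ)) ^ 3 = t := by
    rw [← Real.rpow_natCast, ← Real.rpow_mul ht]; norm_num
  have square {t : ℝ} (ht : 0 ≤ t) : t ^ (2 / 3 : ℝ) = (t ^ (1 / 3 : ℝ)) ^ 2 := by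
    rw [← Real.rpow_natCast, ← Real.rpow_mul ht]; norm_num
  rw [square hS, square hε]
  set x := S ^ (1 / 3 : ℝ)
  set e := ε ^ (1 / 3 : ℝ)
  have hx : 0 ≤ x := Real.rpow_nonneg hS _
  have he : 0 ≤ e := Real.rpow_nonneg hε _
  rw [← cube hS, ← cube hε] at h
  by_contra! hlt
  have hex : e ≤ x := by nlinarith
  nlinarith [mul_le_mul_of_nonneg_left hex (sq_nonneg e)]

theorem summable_and_tsum_rpow_le_of_sum_Icc_neg {f : ℤ → ℝ} (hf : 0 ≤ f) {p L : ℝ}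
    (hp : 0 < p) {u : ℕ → ℝ} (hu : Tendsto u atTop (𝓝 L))
    (h : ∀ N : ℕ, (∑ n ∈ Icc (-N : ℤ) N, f n) ^ p ≤ u N) :
    Summable f ∧ (∑' n, f n) ^ p ≤ L := by
  have hS : ∀ N : ℕ, 0 ≤ ∑ n ∈ Icc (-N : ℤ) N, f n := fun N => sum_nonneg fun n _ => hf n
  obtain ⟨K, hK⟩ := hu.bddAbove_range
  have bound (N : ℕ) : ∑ n ∈ Icc (-N : ℤ) N, f n ≤ K ^ p⁻¹ := by
    rw [← Real.rpow_rpow_inv (hS N) hp.ne']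
    exact Real.rpow_le_rpow (Real.rpow_nonneg (hS N) p) ((h N).trans (hK ⟨N, rfl⟩))
      (inv_nonneg.2 hp.le)
  have summable : Summable f := summable_of_sum_le hf fun s => by
    obtain ⟨N, hN⟩ := (tendsto_Icc_neg.eventually (eventually_ge_atTop s)).exists
    exact (sum_le_sum_of_subset_of_nonneg hN fun n _ _ => hf n).trans (bound N)
  refine ⟨summable, le_of_tendsto_of_tendsto' ?_ hu h⟩
  exact ((summable.hasSum.comp tendsto_Icc_neg).rpow_const (Or.inr hp.le))

theorem tendsto_cofinite_zero_of_summable_norm_pow {ι E : Type*} [SeminormedAddCommGroup E]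
    {a : ι → E} {k : ℕ} (hk : k ≠ 0) (h : Summable fun n => ‖a n‖ ^ k) :
    Tendsto a cofinite (𝓝 0) := by
  rw [tendsto_zero_iff_norm_tendsto_zero]
  have := h.tendsto_cofinite_zero.rpow_const (p := (k : ℝ)⁻¹) (Or.inr (by positivity))
  simpa [Real.pow_rpow_inv_natCast (norm_nonneg _) hk, hk] using this

def boundaryTerm {E : Type*} [SeminormedAddCommGroup E] (a : ℤ → E) (M N : ℤ) : ℝ :=
  ‖a (N + 1)‖ * ‖Δ_[1] a N‖ ^ 2 + ‖a M‖ * ‖Δ_[1] a M‖ ^ 2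

theorem boundaryTerm_nonneg {E : Type*} [SeminormedAddCommGroup E] (a : ℤ → E) (M N : ℤ) :
    0 ≤ boundaryTerm a M N := by
  unfold boundaryTerm; positivity

theorem tendsto_boundaryTerm_neg_self {E : Type*} [SeminormedAddCommGroup E] {a : ℤ → E}
    (ha : Tendsto a cofinite (𝓝 0)) :
    Tendsto (fun N : ℕ => boundaryTerm a (-N) N) atTop (𝓝 0) := by
  have ha₀ : Tendsto (fun n => ‖a n‖) cofinite (𝓝 0) := tendsto_norm_zero.comp ha
  have ha₁ : Tendsto (fun n => ‖a (n + 1)‖) cofinite (𝓝 0) :=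
    ha₀.comp (add_left_injective 1).tendsto_cofinite
  have hb : Tendsto (fun n => ‖Δ_[1] a n‖) cofinite (𝓝 0) :=
    squeeze_zero (fun n => norm_nonneg _) (fun n => norm_sub_le _ _) (by simpa using ha₁.add ha₀)
  have top := ((ha₁.mul (hb.pow 2)).mono_left atTop_le_cofinite).comp tendsto_natCast_atTop_atTop
  have bot := ((ha₀.mul (hb.pow 2)).mono_left atBot_le_cofinite).comp
    (tendsto_neg_atTop_atBot.comp tendsto_natCast_atTop_atTop)
  simpa [boundaryTerm] using top.add bot

section
variable {E : Type*} [NormedAddCommGroup E] [InnerProductSpace ℝ E]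

theorem sum_Icc_inner_fwdDiff (a g : ℤ → E) {M N : ℤ} (h : M ≤ N) :
    ∑ n ∈ Icc M N, ⟪Δ_[1] a n, g n⟫ =
      ⟪a (N + 1), g N⟫ - ⟪a M, g M⟫ - ∑ n ∈ Ico M N, ⟪a (n + 1), Δ_[1] g n⟫ := by
  have telescope := sum_Ico_fwdDiff_int (fun n => ⟪a n, g n⟫) h
  have step (n : ℤ) : Δ_[1] (fun n => ⟪a n, g n⟫) n =
      ⟪Δ_[1] a n, g n⟫ + ⟪a (n + 1), Δ_[1] g n⟫ := by
    simp only [fwdDiff, inner_sub_left, inner_sub_right]; ring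
  simp only [step, sum_add_distrib] at telescope
  rw [← Ico_insert_right h, sum_insert (by simp), fwdDiff, inner_sub_left]
  linarith

theorem sum_Icc_norm_fwdDiff_pow_three_le (a : ℤ → E) {M N : ℤ} (h : M ≤ N) :
    ∑ n ∈ Icc M N, ‖Δ_[1] a n‖ ^ 3 ≤ boundaryTerm a M N +
      ∑ n ∈ Ico M N, ‖a (n + 1)‖ * (‖Δ_[1] a (n + 1)‖ + ‖Δ_[1] a n‖) * ‖Δ_[1] (Δ_[1] a) n‖ := by
  unfold boundaryTerm
  set b := Δ_[1] a
  set g : ℤ → E := fun n => ‖b n‖ • b n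
  have norm_g (n : ℤ) : ‖g n‖ = ‖b n‖ ^ 2 := by
    simp only [g, norm_smul, norm_norm]; ring
  have cube (n : ℤ) : ‖b n‖ ^ 3 = ⟪b n, g n⟫ := by
    rw [real_inner_smul_right, real_inner_self_eq_norm_sq]; ring
  have boundary (x : E) (n : ℤ) : |⟪x, g n⟫| ≤ ‖x‖ * ‖b n‖ ^ 2 :=
    (abs_real_inner_le_norm _ _).trans_eq (by rw [norm_g])
  have interior (n : ℤ) : -⟪a (n + 1), Δ_[1] g n⟫ ≤
      ‖a (n + 1)‖ * (‖b (n + 1)‖ + ‖b n‖) * ‖Δ_[1] b n‖ := by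
    rw [mul_assoc]
    refine (neg_le_abs _).trans ((abs_real_inner_le_norm _ _).trans ?_)
    gcongr
    exact norm_norm_smul_sub_norm_smul_le (b (n + 1)) (b n)
  simp only [cube]
  rw [sum_Icc_inner_fwdDiff a g h]
  have := sum_le_sum fun n (_ : n ∈ Ico M N) => interior n
  rw [sum_neg_distrib] at this
  linarith [le_abs_self ⟪a (N + 1), g N⟫, neg_le_abs ⟪a M, g M⟫, boundary (a (N + 1)) N,
    boundary (a M) M]

theorem sum_Icc_norm_fwdDiff_pow_three_le_of_summable (a : ℤ → E)
    (h6 : Summable fun n => ‖a n‖ ^ 6) (h2 : Summable fun n => ‖Δ_[1] (Δ_[1] a) n‖ ^ 2)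
    {M N : ℤ} (h : M ≤ N) :
    ∑ n ∈ Icc M N, ‖Δ_[1] a n‖ ^ 3 ≤ boundaryTerm a M N +
      2 * (∑' n, ‖a n‖ ^ 6) ^ (1 / 6 : ℝ) * (∑' n, ‖Δ_[1] (Δ_[1] a) n‖ ^ 2) ^ (1 / 2 : ℝ) *
        (∑ n ∈ Icc M N, ‖Δ_[1] a n‖ ^ 3) ^ (1 / 3 : ℝ) := by
  set b := Δ_[1] a
  set S := ∑ n ∈ Icc M N, ‖b n‖ ^ 3
  have shifted_a : ∑ n ∈ Ico M N, ‖a (n + 1)‖ ^ 6 ≤ ∑' n, ‖a n‖ ^ 6 := by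
    rw [sum_Ico_add' (fun n => ‖a n‖ ^ 6)]
    exact h6.sum_le_tsum _ fun n _ => by positivity
  have shifted_b : ∑ n ∈ Ico M N, ‖b (n + 1)‖ ^ 3 ≤ S := by
    rw [sum_Ico_add' (fun n => ‖b n‖ ^ 3)]
    refine sum_le_sum_of_subset_of_nonneg (fun n => ?_) fun n _ _ => by positivity
    simp only [mem_Ico, mem_Icc]
    omega
  have unshifted_b : ∑ n ∈ Ico M N, ‖b n‖ ^ 3 ≤ S :=
    sum_le_sum_of_subset_of_nonneg Ico_subset_Icc_self fun n _ _ => by positivity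
  have holder {y : ℤ → ℝ} (hy : ∀ n, 0 ≤ y n) (hyS : ∑ n ∈ Ico M N, y n ^ 3 ≤ S) :=
    sum_mul_mul_le_of_sum_pow_le (Ico M N) (fun n => norm_nonneg (a (n + 1))) hy
      (fun n => norm_nonneg (Δ_[1] b n)) shifted_a hyS (h2.sum_le_tsum _ fun n _ => by positivity)
  have := holder (fun n => norm_nonneg (b (n + 1))) shifted_b
  have := holder (fun n => norm_nonneg (b n)) unshifted_b
  refine (sum_Icc_norm_fwdDiff_pow_three_le a h).trans ?_
  simp only [mul_add, add_mul, sum_add_distrib]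
  linarith

theorem summable_and_L3_norm_sq_fwdDiff_le (a : ℤ → E) (h6 : Summable fun n => ‖a n‖ ^ 6)
    (h2 : Summable fun n => ‖Δ_[1] (Δ_[1] a) n‖ ^ 2) :
    (Summable fun n => ‖Δ_[1] a n‖ ^ 3) ∧
      (∑' n, ‖Δ_[1] a n‖ ^ 3) ^ (2 / 3 : ℝ) ≤
        2 * (∑' n, ‖Δ_[1] (Δ_[1] a) n‖ ^ 2) ^ (1 / 2 : ℝ) * (∑' n, ‖a n‖ ^ 6) ^ (1 / 6 : ℝ) := by
  set D := 2 * (∑' n, ‖a n‖ ^ 6) ^ (1 / 6 : ℝ) * (∑' n, ‖Δ_[1] (Δ_[1] a) n‖ ^ 2) ^ (1 / 2 : ℝ)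
  have hD : 0 ≤ D := by positivity
  have hu : Tendsto (fun N : ℕ => D + boundaryTerm a (-N) N ^ (2 / 3 : ℝ)) atTop (𝓝 D) := by
    have := tendsto_boundaryTerm_neg_self (tendsto_cofinite_zero_of_summable_norm_pow
      (by norm_num) h6)
    simpa using tendsto_const_nhds.add (this.rpow_const (p := 2 / 3) (Or.inr (by norm_num)))
  have window (N : ℕ) : (∑ n ∈ Icc (-N : ℤ) N, ‖Δ_[1] a n‖ ^ 3) ^ (2 / 3 : ℝ) ≤
      D + boundaryTerm a (-N) N ^ (2 / 3 : ℝ) :=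
    rpow_two_thirds_le_of_le_add_mul_rpow_one_third (by positivity) (boundaryTerm_nonneg a _ _)
      hD (sum_Icc_norm_fwdDiff_pow_three_le_of_summable a h6 h2 (by omega))
  have := summable_and_tsum_rpow_le_of_sum_Icc_neg (fun n => by positivity) (by norm_num) hu window
  exact ⟨this.1, this.2.trans_eq (by ring)⟩
end

theorem stmt4 (α : ℤ → ℂ)
    (h6 : Summable fun n : ℤ => ‖α n‖ ^ (6 : ℕ))
    (h2 : Summable fun n : ℤ => ‖α (n + 2) - 2 * α (n + 1) + α n‖ ^ (2 : ℕ)) :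
    (Summable fun n : ℤ => ‖α (n + 1) - α n‖ ^ (3 : ℕ)) ∧
      (∑' n : ℤ, ‖α (n + 1) - α n‖ ^ (3 : ℕ)) ^ ((2 : ℝ) / 3) ≤
        2 * (∑' n : ℤ, ‖α (n + 2) - 2 * α (n + 1) + α n‖ ^ (2 : ℕ)) ^ ((1 : ℝ) / 2) *
          (∑' n : ℤ, ‖α n‖ ^ (6 : ℕ)) ^ ((1 : ℝ) / 6) := by
  have first_diff (n : ℤ) : Δ_[1] α n = α (n + 1) - α n := rfl
  have second_diff (n : ℤ) : Δ_[1] (Δ_[1] α) n = α (n + 2) - 2 * α (n + 1) + α n := by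
    simp only [fwdDiff, add_assoc, one_add_one_eq_two]; ring
  simpa only [first_diff, second_diff] using
    summable_and_L3_norm_sq_fwdDiff_le α h6 (by simpa only [second_diff] using h2)
end

section
/- For every θ ∈ ℝ, the function ψ ↦ log|e^{iψ} − e^{iθ}| is Lebesgue integrable on [0,2π], and for every nonzero integer n, −∫₀^{2π} e^{inψ} log|e^{iψ} − e^{iθ}| dψ/(2π) = e^{inθ}/(2|n|); for n = 0 the integral ∫₀^{2π} log|e^{iψ} − e^{iθ}| dψ/(2π) equals 0. -/
/-!
For `|r| < 1` the Taylor series of `log (1 - w)` gives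
`log ‖e^{iψ} - r e^{iθ}‖ = -∑_{k ≥ 1} r^k cos (k (θ - ψ)) / k`, and integrating term by term against
`e^{inψ}` over `[0, 2π]` leaves only `k = |n|`, giving `-π r^{|n|} e^{inθ} / |n|`. This integral
is continuous in `r ∈ [-1, 1]` by dominated convergence: since
`‖1 - r e^{iφ}‖² = (r - cos φ)² + sin² φ`, the integrand is dominated by `log 2 - log |sin (θ - ψ)|`.
Letting `r → 1` gives the case `n ≠ 0`; integrability and the case `n = 0` are the circle averages
of `log ‖z - a‖` known to Mathlib.
-/

open Real Filter Topology MeasureTheory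
open scoped Complex
open Complex (I)

lemma abs_log_le_log_sub_log {a b x : ℝ} (ha : 0 < a) (ha1 : a ≤ 1) (hb1 : 1 ≤ b)
    (hax : a ≤ x) (hxb : x ≤ b) : |log x| ≤ log b - log a := by
  have := log_le_log ha hax
  have := log_le_log (ha.trans_le hax) hxb
  have := log_nonpos ha.le ha1
  have := log_nonneg hb1
  rw [abs_le]
  constructor <;> linarith

lemma ae_sin_sub_ne_zero (θ : ℝ) : ∀ᵐ ψ, sin (θ - ψ) ≠ 0 := by
  have hc : {ψ | sin (θ - ψ) = 0}.Countable :=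
    (Set.countable_range fun k : ℤ => θ - k * π).mono fun ψ h => by
      obtain ⟨k, hk⟩ := sin_eq_zero_iff.1 h
      exact ⟨k, by linarith⟩
  simpa using hc.ae_notMem volume

lemma abs_pow_div_mul_cos_le (r x : ℝ) (k : ℕ) : |r ^ k / k * cos x| ≤ |r| ^ k := by
  rw [abs_mul, abs_div, abs_pow, Nat.abs_cast]
  rcases k.eq_zero_or_pos with rfl | hk
  · simp
  · calc |r| ^ k / k * |cos x| ≤ |r| ^ k / k * 1 := by gcongr; exact abs_cos_le_one x
      _ ≤ |r| ^ k := by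
        rw [mul_one]
        exact div_le_self (by positivity) (by exact_mod_cast hk)

lemma norm_exp_int_mul_mul_I (n : ℤ) (ψ : ℝ) : ‖cexp (n * ψ * I)‖ = 1 := by
  simpa using Complex.norm_exp_ofReal_mul_I (n * ψ)

lemma norm_exp_mul_I_sub_mul_exp_mul_I (r θ ψ : ℝ) :
    ‖cexp (ψ * I) - r * cexp (θ * I)‖ = ‖1 - r * cexp ((θ - ψ : ℝ) * I)‖ := by
  have : cexp (ψ * I) - r * cexp (θ * I) = cexp (ψ * I) * (1 - r * cexp ((θ - ψ : ℝ) * I)) := by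
    rw [mul_sub, mul_one, mul_left_comm, ← Complex.exp_add]
    push_cast
    ring_nf
  rw [this, norm_mul, Complex.norm_exp_ofReal_mul_I, one_mul]

lemma sq_norm_one_sub_mul_exp_mul_I (r φ : ℝ) :
    ‖1 - r * cexp (φ * I)‖ ^ 2 = (r - cos φ) ^ 2 + sin φ ^ 2 := by
  rw [Complex.sq_norm, Complex.normSq_apply]
  simp only [Complex.sub_re, Complex.one_re, Complex.mul_re, Complex.ofReal_re,
    Complex.exp_ofReal_mul_I_re, Complex.ofReal_im, Complex.exp_ofReal_mul_I_im, zero_mul, sub_zero,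
    Complex.sub_im, Complex.one_im, Complex.mul_im, add_zero, zero_sub, mul_neg, neg_mul, neg_neg]
  linear_combination (r ^ 2 - 1) * sin_sq_add_cos_sq φ

lemma abs_sin_le_norm_one_sub_mul_exp_mul_I (r φ : ℝ) : |sin φ| ≤ ‖1 - r * cexp (φ * I)‖ :=
  abs_le_of_sq_le_sq (by nlinarith [sq_norm_one_sub_mul_exp_mul_I r φ]) (norm_nonneg _)

lemma norm_one_sub_mul_exp_mul_I_le {r : ℝ} (hr : |r| ≤ 1) (φ : ℝ) :
    ‖1 - r * cexp (φ * I)‖ ≤ 2 := by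
  calc ‖1 - r * cexp (φ * I)‖ ≤ ‖(1 : ℂ)‖ + ‖r * cexp (φ * I)‖ := norm_sub_le _ _
    _ ≤ 2 := by
      rw [norm_one, norm_mul, Complex.norm_real, Real.norm_eq_abs,
        Complex.norm_exp_ofReal_mul_I, mul_one]
      linarith

lemma abs_log_norm_one_sub_mul_exp_mul_I_le {r φ : ℝ} (hr : |r| ≤ 1) (hφ : sin φ ≠ 0) :
    |log ‖1 - r * cexp (φ * I)‖| ≤ log 2 - log |sin φ| :=
  abs_log_le_log_sub_log (abs_pos.2 hφ) (abs_sin_le_one φ) one_le_two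
    (abs_sin_le_norm_one_sub_mul_exp_mul_I r φ) (norm_one_sub_mul_exp_mul_I_le hr φ)

lemma hasSum_log_norm_one_sub_mul_exp_mul_I {r : ℝ} (hr : |r| < 1) (φ : ℝ) :
    HasSum (fun k : ℕ => -(r ^ k / k * cos (k * φ))) (log ‖1 - r * cexp (φ * I)‖) := by
  have hz : ‖(r : ℂ) * cexp (φ * I)‖ < 1 := by simpa [Complex.norm_exp_ofReal_mul_I] using hr
  have h := (Complex.hasSum_re (Complex.hasSum_taylorSeries_neg_log hz)).neg
  have hterm (k : ℕ) : ((r * cexp (φ * I)) ^ k / k : ℂ).re = r ^ k / k * cos (k * φ) := by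
    rw [mul_pow, ← Complex.exp_nat_mul, ← Complex.ofReal_pow, ← mul_assoc,
      ← Complex.ofReal_natCast, ← Complex.ofReal_mul, mul_div_right_comm, ← Complex.ofReal_div,
      Complex.re_ofReal_mul, Complex.exp_ofReal_mul_I_re]
  simpa [hterm, Complex.log_re] using h

lemma integral_exp_int_mul_mul_I (m : ℤ) :
    ∫ ψ in 0..2 * π, cexp (m * ψ * I) = if m = 0 then 2 * π else 0 := by
  split_ifs with hm
  · simp [hm]
  · have hc : (m : ℂ) * I ≠ 0 := mul_ne_zero (Int.cast_ne_zero.2 hm) Complex.I_ne_zero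
    have hper : cexp (m * I * (2 * π)) = 1 := by
      rw [← Complex.exp_int_mul_two_pi_mul_I m]
      ring_nf
    simp_rw [mul_right_comm _ _ I]
    simp [integral_exp_mul_complex hc, hper]

lemma integral_exp_int_mul_mul_I_mul_cos {n : ℤ} (hn : n ≠ 0) (k : ℕ) (θ : ℝ) :
    ∫ ψ in 0..2 * π, cexp (n * ψ * I) * cos (k * (θ - ψ)) =
      if k = n.natAbs then π * cexp (n * θ * I) else 0 := by
  have hsplit (ψ : ℝ) : cexp (n * ψ * I) * (cos (k * (θ - ψ)) : ℝ) =
      cexp (k * θ * I) / 2 * cexp ((n - k : ℤ) * ψ * I) +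
        cexp (-k * θ * I) / 2 * cexp ((n + k : ℤ) * ψ * I) := by
    rw [Complex.ofReal_cos, Complex.cos, div_mul_eq_mul_div, div_mul_eq_mul_div,
      ← Complex.exp_add, ← Complex.exp_add, ← add_div, mul_div_assoc', mul_add,
      ← Complex.exp_add, ← Complex.exp_add]
    congr 3 <;> push_cast <;> ring
  have hint (m : ℤ) : IntervalIntegrable (fun ψ : ℝ => cexp (m * ψ * I)) volume 0 (2 * π) :=
    (by fun_prop : Continuous fun ψ : ℝ => cexp (m * ψ * I)).intervalIntegrable _ _
  simp_rw [hsplit]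
  rw [intervalIntegral.integral_add ((hint _).const_mul _) ((hint _).const_mul _),
    intervalIntegral.integral_const_mul, intervalIntegral.integral_const_mul,
    integral_exp_int_mul_mul_I, integral_exp_int_mul_mul_I]
  by_cases hk : k = n.natAbs
  · have hk0 : k ≠ 0 := by omega
    rw [if_pos hk]
    rcases Int.natAbs_eq n with h | h <;> rw [← hk] at h <;> subst h
    · rw [if_pos (sub_self _), if_neg (by omega)]
      push_cast
      ring
    · rw [if_neg (by omega), if_pos (neg_add_cancel _)]
      push_cast
      ring
  · rw [if_neg hk, if_neg (by omega), if_neg (by omega)]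
    simp

lemma integral_exp_int_mul_mul_I_mul_log_norm_exp_sub_mul_exp {r : ℝ} (hr : |r| < 1) {n : ℤ}
    (hn : n ≠ 0) (θ : ℝ) :
    ∫ ψ in 0..2 * π, cexp (n * ψ * I) * log ‖cexp (ψ * I) - r * cexp (θ * I)‖ =
      -(r ^ n.natAbs / n.natAbs * (π * cexp (n * θ * I))) := by
  set F : ℕ → ℝ → ℂ := fun k ψ => cexp (n * ψ * I) * ↑(-(r ^ k / k * cos (k * (θ - ψ))))
  have hF : HasSum (fun k => ∫ ψ in 0..2 * π, F k ψ)
      (∫ ψ in 0..2 * π, cexp (n * ψ * I) * log ‖cexp (ψ * I) - r * cexp (θ * I)‖) := by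
    refine intervalIntegral.hasSum_integral_of_dominated_convergence (fun k _ => |r| ^ k)
      (fun k => (by fun_prop : Continuous (F k)).aestronglyMeasurable)
      (fun k => ae_of_all _ fun ψ _ => ?_)
      (ae_of_all _ fun _ _ => summable_geometric_of_lt_one (abs_nonneg r) hr)
      intervalIntegrable_const
      (ae_of_all _ fun ψ _ => ?_)
    · rw [norm_mul, norm_exp_int_mul_mul_I, one_mul, Complex.norm_real, norm_neg,
        Real.norm_eq_abs]
      exact abs_pow_div_mul_cos_le r _ k
    · rw [norm_exp_mul_I_sub_mul_exp_mul_I]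
      exact (Complex.hasSum_ofReal.2 (hasSum_log_norm_one_sub_mul_exp_mul_I hr _)).mul_left _
  have hterm (k : ℕ) : ∫ ψ in 0..2 * π, F k ψ =
      if k = n.natAbs then -(r ^ n.natAbs / n.natAbs * (π * cexp (n * θ * I))) else 0 := by
    simp only [F, Complex.ofReal_neg, Complex.ofReal_mul, mul_neg, mul_left_comm (cexp _),
      intervalIntegral.integral_neg, intervalIntegral.integral_const_mul]
    rw [integral_exp_int_mul_mul_I_mul_cos hn]
    split_ifs with hk
    · subst hk; push_cast; rfl
    · simp
  simp_rw [hterm] at hF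
  exact hF.unique (hasSum_ite_eq _ _)

lemma continuousOn_integral_exp_int_mul_mul_I_mul_log_norm_exp_sub_mul_exp (n : ℤ) (θ : ℝ) :
    ContinuousOn (fun r : ℝ =>
      ∫ ψ in 0..2 * π, cexp (n * ψ * I) * log ‖cexp (ψ * I) - r * cexp (θ * I)‖)
      (Set.Icc (-1) 1) := by
  intro r₀ _
  have hbound : IntervalIntegrable (fun ψ => log 2 - log |sin (θ - ψ)|) volume 0 (2 * π) := by
    simp_rw [log_abs]
    exact intervalIntegrable_const.sub
      (by simpa using (intervalIntegrable_log_sin (a := θ) (b := θ - 2 * π)).comp_sub_left θ)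
  refine intervalIntegral.continuousWithinAt_of_dominated_interval
    (Eventually.of_forall fun r => ?_) (eventually_nhdsWithin_of_forall fun r hr => ?_) hbound ?_
  · exact (by fun_prop : Measurable _).aestronglyMeasurable
  · filter_upwards [ae_sin_sub_ne_zero θ] with ψ hψ _
    rw [norm_mul, norm_exp_int_mul_mul_I, one_mul, Complex.norm_real, Real.norm_eq_abs,
      norm_exp_mul_I_sub_mul_exp_mul_I]
    exact abs_log_norm_one_sub_mul_exp_mul_I_le (abs_le.2 hr) hψ
  · filter_upwards [ae_sin_sub_ne_zero θ] with ψ hψ _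
    have hne : ‖cexp (ψ * I) - r₀ * cexp (θ * I)‖ ≠ 0 := by
      rw [norm_exp_mul_I_sub_mul_exp_mul_I]
      exact ((abs_pos.2 hψ).trans_le (abs_sin_le_norm_one_sub_mul_exp_mul_I _ _)).ne'
    have hlog : ContinuousAt (fun r : ℝ => log ‖cexp (ψ * I) - r * cexp (θ * I)‖) r₀ :=
      ContinuousAt.log (by fun_prop) hne
    exact (continuousAt_const.mul
      (Complex.continuous_ofReal.continuousAt.comp hlog)).continuousWithinAt

theorem integral_exp_int_mul_mul_I_mul_log_norm_exp_sub_exp {n : ℤ} (hn : n ≠ 0) (θ : ℝ) :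
    ∫ ψ in 0..2 * π, cexp (n * ψ * I) * log ‖cexp (ψ * I) - cexp (θ * I)‖ =
      -(π * cexp (n * θ * I) / n.natAbs) := by
  have hdisk : Set.EqOn
      (fun r : ℝ => ∫ ψ in 0..2 * π, cexp (n * ψ * I) * log ‖cexp (ψ * I) - r * cexp (θ * I)‖)
      (fun r : ℝ => -(r ^ n.natAbs / n.natAbs * (π * cexp (n * θ * I)))) (Set.Ioo (-1) 1) :=
    fun r hr => integral_exp_int_mul_mul_I_mul_log_norm_exp_sub_mul_exp (abs_lt.2 hr) hn θ
  have h := hdisk.of_subset_closure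
    (continuousOn_integral_exp_int_mul_mul_I_mul_log_norm_exp_sub_mul_exp n θ) (by fun_prop)
    Set.Ioo_subset_Icc_self (closure_Ioo (by norm_num)).ge (Set.right_mem_Icc.2 (by norm_num))
  simp only [Complex.ofReal_one, one_mul, one_pow] at h
  rw [h]
  ring

theorem stmt8 (θ : ℝ) :
    IntegrableOn
      (fun ψ : ℝ =>
        Real.log ‖Complex.exp (ψ * Complex.I) - Complex.exp (θ * Complex.I)‖)
      (Set.Icc 0 (2 * Real.pi)) MeasureTheory.volume ∧
    (∀ n : ℤ, n ≠ 0 →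
      -((1 / (2 * Real.pi) : ℝ) • ∫ ψ in Set.Icc 0 (2 * Real.pi),
          Complex.exp ((n : ℂ) * ψ * Complex.I) *
            (Real.log ‖Complex.exp (ψ * Complex.I) - Complex.exp (θ * Complex.I)‖ : ℂ)) =
        Complex.exp ((n : ℂ) * θ * Complex.I) / (2 * ((|n| : ℤ) : ℂ))) ∧
    ((1 / (2 * Real.pi) : ℝ) • ∫ ψ in Set.Icc 0 (2 * Real.pi),
        Real.log ‖Complex.exp (ψ * Complex.I) - Complex.exp (θ * Complex.I)‖ = 0) := by
  have h2π : 0 ≤ 2 * π := by positivity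
  have hint := circleIntegrable_log_norm_sub_const (a := cexp (θ * I)) (c := 0) 1
  have havg := circleAverage_log_norm_sub_const₁ (Complex.norm_exp_ofReal_mul_I θ)
  simp only [CircleIntegrable, circleAverage, circleMap, zero_add, Complex.ofReal_one, one_mul]
    at hint havg
  refine ⟨(intervalIntegrable_iff_integrableOn_Icc_of_le h2π).1 hint, fun n hn => ?_, ?_⟩
  · rw [integral_Icc_eq_integral_Ioc, ← intervalIntegral.integral_of_le h2π,
      integral_exp_int_mul_mul_I_mul_log_norm_exp_sub_exp hn, Complex.real_smul,
      ← Int.natCast_natAbs, Int.cast_natCast]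
    have hn' : (n.natAbs : ℂ) ≠ 0 := by exact_mod_cast Int.natAbs_ne_zero.2 hn
    have hπ : (π : ℂ) ≠ 0 := by exact_mod_cast pi_ne_zero
    push_cast
    field_simp
  · rw [integral_Icc_eq_integral_Ioc, ← intervalIntegral.integral_of_le h2π]
    simpa using havg
end

section
/- Let m ≥ 1 and k ≥ 1 be integers, let Ω ⊂ ℝ^m be compact with 0 ∈ Ω, and let G : Ω^k → ℝ be continuous with G(0,…,0) = 0. Suppose there exists C ≥ 0 such that for every sequence x = (x₁,x₂,…) ∈ Ω^∞ with only finitely many nonzero entries, ∑_{j=0}^{∞} G(x_{j+1},…,x_{j+k}) ≥ −C. Then there exist continuous functions G̃ : Ω^k → ℝ and Γ : Ω^{k−1} → ℝ such that G̃(y) ≥ 0 for all y ∈ Ω^k and G(x₁,…,x_k) = G̃(x₁,…,x_k) + Γ(x₁,…,x_{k−1}) − Γ(x₂,…,x_k) for all (x₁,…,x_k) ∈ Ω^k. -/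
/-!
Let `Γ(y)` be the least total cost `∑ G(window)` of a finite word in `Ω` followed by the block
`y ∈ Ω^(k-1)`, counting only the windows that start inside the word. The bound `-C` on the
cost of finitely supported sequences, together with `G ≤ M` on the `k - 1` windows that
meet the block, makes this infimum finite. Appending one letter gives
`Γ(x₂,…,x_k) ≤ Γ(x₁,…,x_{k-1}) + G(x)`, so `G̃ := G + Γ ∘ init - Γ ∘ tail ≥ 0`, and the
decomposition holds with the potential `-Γ`. Changing the block only changes the `k - 1`
windows that meet it, so the costs are equicontinuous in `y` by uniform continuity of `G`
on the compact set `Ωᵏ`. An infimum of such a family is continuous.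
-/

open Finset

theorem continuousOn_iInf_of_le_add {X ι : Type*} [PseudoMetricSpace X] [Nonempty ι]
    {f : ι → X → ℝ} {s : Set X} (hbdd : ∀ x ∈ s, BddBelow (Set.range fun i => f i x))
    (hequi : ∀ ε > 0, ∃ δ > 0, ∀ i, ∀ x ∈ s, ∀ y ∈ s, dist x y < δ → f i x ≤ f i y + ε) :
    ContinuousOn (fun x => ⨅ i, f i x) s := by
  have hinf : ∀ ε > 0, ∃ δ > 0, ∀ x ∈ s, ∀ y ∈ s, dist x y < δ →
      ⨅ i, f i x ≤ (⨅ i, f i y) + ε := by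
    intro ε hε
    obtain ⟨δ, hδ, h⟩ := hequi ε hε
    refine ⟨δ, hδ, fun x hx y hy hxy => sub_le_iff_le_add.1 (le_ciInf fun i => ?_)⟩
    exact sub_le_iff_le_add.2 ((ciInf_le (hbdd x hx) i).trans (h i x hx y hy hxy))
  rw [Metric.continuousOn_iff]
  intro x hx ε hε
  obtain ⟨δ, hδ, h⟩ := hinf (ε / 2) (half_pos hε)
  refine ⟨δ, hδ, fun y hy hyx => ?_⟩
  rw [Real.dist_eq, abs_sub_lt_iff]
  constructor <;> linarith [h y hy x hx hyx, h x hx y hy (by rwa [dist_comm])]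

namespace WindowCost

variable {V : Type*}

def window {r : ℕ} (x : ℕ → V) (j : ℕ) : Fin r → V := fun i => x (j + i)

section Concat

variable [Zero V] {r : ℕ}

def concatSeq (n : ℕ) (z : ℕ → V) (y : Fin r → V) : ℕ → V := fun p =>
  if p < n then z p else if h : p - n < r then y ⟨p - n, h⟩ else 0

variable {n : ℕ} {z : ℕ → V}

theorem concatSeq_of_lt (y : Fin r → V) {p : ℕ} (hp : p < n) : concatSeq n z y p = z p :=
  if_pos hp

theorem concatSeq_add (y : Fin r → V) (i : Fin r) : concatSeq n z y (n + i) = y i := by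
  simp [concatSeq]

theorem concatSeq_of_le (y : Fin r → V) {p : ℕ} (hp : n + r ≤ p) : concatSeq n z y p = 0 := by
  simp only [concatSeq]
  split_ifs <;> first | rfl | omega

theorem concatSeq_mem {Ω : Set V} (h0 : 0 ∈ Ω) (hz : ∀ j, z j ∈ Ω) {y : Fin r → V}
    (hy : ∀ i, y i ∈ Ω) (p : ℕ) : concatSeq n z y p ∈ Ω := by
  simp only [concatSeq]
  split_ifs
  exacts [hz p, hy _, h0]

theorem window_concatSeq (y : Fin r → V) : window (concatSeq n z y) n = y :=
  funext (concatSeq_add y)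

theorem concatSeq_succ_tail (x : Fin (r + 1) → V) :
    concatSeq (n + 1) (concatSeq n z x) (Fin.tail x) = concatSeq n z x := by
  funext p
  simp only [concatSeq, Fin.tail]
  split_ifs <;> first | rfl | omega | (congr 1; ext; simp only [Fin.val_succ]; omega)

theorem concatSeq_init_of_lt (x : Fin (r + 1) → V) {p : ℕ} (hp : p < n + r) :
    concatSeq n z (Fin.init x) p = concatSeq n z x p := by
  simp only [concatSeq, Fin.init]
  split_ifs <;> first | rfl | omega

theorem dist_concatSeq_le [PseudoMetricSpace V] (y y' : Fin r → V) (p : ℕ) :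
    dist (concatSeq n z y p) (concatSeq n z y' p) ≤ dist y y' := by
  simp only [concatSeq]
  split_ifs
  exacts [(dist_self _).trans_le dist_nonneg, dist_le_pi_dist y y' _,
    (dist_self _).trans_le dist_nonneg]

end Concat

section Cost

variable [Zero V] {r : ℕ} (G : (Fin (r + 1) → V) → ℝ)

def pathCost (n : ℕ) (z : ℕ → V) (y : Fin r → V) : ℝ :=
  ∑ j ∈ range n, G (window (concatSeq n z y) j)

theorem pathCost_succ_tail (n : ℕ) (z : ℕ → V) (x : Fin (r + 1) → V) :
    pathCost G (n + 1) (concatSeq n z x) (Fin.tail x) = pathCost G n z (Fin.init x) + G x := by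
  rw [pathCost, concatSeq_succ_tail, sum_range_succ, window_concatSeq, pathCost]
  congr 1
  refine sum_congr rfl fun j hj => congrArg G (funext fun i => ?_)
  exact (concatSeq_init_of_lt x (by have := mem_range.1 hj; omega)).symm

theorem neg_sub_le_pathCost {Ω : Set V} (h0 : 0 ∈ Ω) (hG0 : G 0 = 0) {C M : ℝ}
    (hbd : ∀ x : ℕ → V, (∀ n, x n ∈ Ω) → {n | x n ≠ 0}.Finite →
      -C ≤ ∑' j : ℕ, G (window x j))
    (hM : ∀ w : Fin (r + 1) → V, (∀ i, w i ∈ Ω) → G w ≤ M)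
    (n : ℕ) {z : ℕ → V} (hz : ∀ j, z j ∈ Ω) {y : Fin r → V} (hy : ∀ i, y i ∈ Ω) :
    -C - r * M ≤ pathCost G n z y := by
  set x := concatSeq n z y
  have hmem : ∀ p, x p ∈ Ω := concatSeq_mem h0 hz hy
  have hsupp : {p | x p ≠ 0}.Finite :=
    (Set.finite_Iio (n + r)).subset fun p hp => by
      by_contra hlt
      exact hp (concatSeq_of_le y (by simpa using hlt))
  have htsum : ∑' j, G (window x j) = ∑ j ∈ range (n + r), G (window x j) :=
    tsum_eq_sum fun j hj => by
      have hwin : window x j = (0 : Fin (r + 1) → V) :=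
        funext fun i => concatSeq_of_le y (by have := mem_range.not.1 hj; omega)
      rw [hwin, hG0]
  have hblock : ∑ j ∈ Ico n (n + r), G (window x j) ≤ r * M :=
    (sum_le_card_nsmul _ _ M fun j _ => hM _ fun i => hmem _).trans_eq (by simp)
  have := hbd x hmem hsupp
  rw [htsum, ← sum_range_add_sum_Ico _ (Nat.le_add_right n r)] at this
  rw [pathCost]
  linarith

theorem pathCost_le_add [PseudoMetricSpace V] {Ω : Set V} (h0 : 0 ∈ Ω) {δ η : ℝ} (hη : 0 ≤ η)
    (hG : ∀ w w' : Fin (r + 1) → V, (∀ i, w i ∈ Ω) → (∀ i, w' i ∈ Ω) → dist w w' < δ →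
      G w ≤ G w' + η)
    (n : ℕ) {z : ℕ → V} (hz : ∀ j, z j ∈ Ω) {y y' : Fin r → V} (hy : ∀ i, y i ∈ Ω)
    (hy' : ∀ i, y' i ∈ Ω) (hyy' : dist y y' < δ) :
    pathCost G n z y ≤ pathCost G n z y' + r * η := by
  have hfar : ∀ j ∈ range (n - r),
      G (window (concatSeq n z y) j) = G (window (concatSeq n z y') j) := fun j hj =>
    congrArg G <| funext fun i => by
      have := mem_range.1 hj
      rw [window, window, concatSeq_of_lt y (by omega), concatSeq_of_lt y' (by omega)]
  have hnear : ∑ j ∈ Ico (n - r) n, G (window (concatSeq n z y) j) ≤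
      ∑ j ∈ Ico (n - r) n, G (window (concatSeq n z y') j) + r * η :=
    calc _ ≤ ∑ j ∈ Ico (n - r) n, (G (window (concatSeq n z y') j) + η) :=
          sum_le_sum fun j _ => hG _ _ (fun i => concatSeq_mem h0 hz hy _)
            (fun i => concatSeq_mem h0 hz hy' _)
            (((dist_pi_le_iff dist_nonneg).2 fun i => dist_concatSeq_le y y' _).trans_lt hyy')
      _ ≤ _ := by
          rw [sum_add_distrib, sum_const, Nat.card_Ico, nsmul_eq_mul]
          gcongr
          exact_mod_cast (by omega : n - (n - r) ≤ r)
  rw [pathCost, pathCost, ← sum_range_add_sum_Ico _ (Nat.sub_le n r),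
    ← sum_range_add_sum_Ico _ (Nat.sub_le n r), sum_congr rfl hfar]
  linarith

/-- A word `z 0, …, z (n-1)` in `Ω`; the entries of `z` from `n` on play no role. -/
abbrev Word (Ω : Set V) : Type _ := ℕ × {z : ℕ → V // ∀ j, z j ∈ Ω}

theorem nonempty_word {Ω : Set V} (h0 : 0 ∈ Ω) : Nonempty (Word Ω) :=
  ⟨(0, ⟨0, fun _ => h0⟩)⟩

noncomputable def infCost (Ω : Set V) (y : Fin r → V) : ℝ :=
  ⨅ p : Word Ω, pathCost G p.1 p.2 y

theorem bddBelow_pathCost {Ω : Set V} (h0 : 0 ∈ Ω) (hG0 : G 0 = 0) {C : ℝ}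
    (hbd : ∀ x : ℕ → V, (∀ n, x n ∈ Ω) → {n | x n ≠ 0}.Finite →
      -C ≤ ∑' j : ℕ, G (window x j))
    (hGbdd : BddAbove (G '' {w | ∀ i, w i ∈ Ω})) {y : Fin r → V} (hy : ∀ i, y i ∈ Ω) :
    BddBelow (Set.range fun p : Word Ω => pathCost G p.1 p.2 y) := by
  obtain ⟨M, hM⟩ := hGbdd
  exact ⟨-C - r * M, Set.forall_mem_range.2 fun p =>
    neg_sub_le_pathCost G h0 hG0 hbd (fun w hw => hM ⟨w, hw, rfl⟩) p.1 p.2.2 hy⟩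

theorem infCost_tail_le {Ω : Set V} (h0 : 0 ∈ Ω)
    (hbdd : ∀ y : Fin r → V, (∀ i, y i ∈ Ω) →
      BddBelow (Set.range fun p : Word Ω => pathCost G p.1 p.2 y))
    {x : Fin (r + 1) → V} (hx : ∀ i, x i ∈ Ω) :
    infCost G Ω (Fin.tail x) ≤ infCost G Ω (Fin.init x) + G x := by
  have := nonempty_word h0
  refine sub_le_iff_le_add.1 (le_ciInf fun ⟨n, z, hz⟩ => sub_le_iff_le_add.2 ?_)
  rw [← pathCost_succ_tail]
  exact ciInf_le (hbdd _ fun i => hx _) (n + 1, ⟨concatSeq n z x, concatSeq_mem h0 hz hx⟩)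

theorem continuousOn_infCost [PseudoMetricSpace V] {Ω : Set V} (h0 : 0 ∈ Ω)
    (hbdd : ∀ y : Fin r → V, (∀ i, y i ∈ Ω) →
      BddBelow (Set.range fun p : Word Ω => pathCost G p.1 p.2 y))
    (hG : UniformContinuousOn G {w | ∀ i, w i ∈ Ω}) :
    ContinuousOn (infCost G Ω) {y : Fin r → V | ∀ i, y i ∈ Ω} := by
  have := nonempty_word h0
  refine continuousOn_iInf_of_le_add hbdd fun ε hε => ?_
  obtain ⟨δ, hδ, hGδ⟩ := Metric.uniformContinuousOn_iff.1 hG (ε / (r + 1)) (by positivity)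
  have hGδ' : ∀ w w' : Fin (r + 1) → V, (∀ i, w i ∈ Ω) → (∀ i, w' i ∈ Ω) → dist w w' < δ →
      G w ≤ G w' + ε / (r + 1) := fun w w' hw hw' hww' => by
    have := hGδ w hw w' hw' hww'
    rw [Real.dist_eq] at this
    linarith [le_abs_self (G w - G w')]
  refine ⟨δ, hδ, fun p y hy y' hy' hyy' =>
    (pathCost_le_add G h0 (by positivity) hGδ' p.1 p.2.2 hy hy' hyy').trans ?_⟩
  rw [mul_div_assoc']
  gcongr
  rw [div_le_iff₀ (by positivity)]
  nlinarith

end Cost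

end WindowCost

open WindowCost in
theorem stmt10 (m k : ℕ) (hk : 1 ≤ k) (Ω : Set (Fin m → ℝ))
    (hΩc : IsCompact Ω) (h0 : (0 : Fin m → ℝ) ∈ Ω)
    (G : (Fin k → Fin m → ℝ) → ℝ)
    (hGcont : ContinuousOn G {y | ∀ i, y i ∈ Ω})
    (hG0 : G 0 = 0)
    (C : ℝ)
    (hbd : ∀ x : ℕ → Fin m → ℝ, (∀ n, x n ∈ Ω) → {n | x n ≠ 0}.Finite →
      -C ≤ ∑' j : ℕ, G (fun i : Fin k => x (j + i))) :
    ∃ Gt : (Fin k → Fin m → ℝ) → ℝ, ∃ Γ : (Fin (k - 1) → Fin m → ℝ) → ℝ,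
      ContinuousOn Gt {y | ∀ i, y i ∈ Ω} ∧
      ContinuousOn Γ {y | ∀ i, y i ∈ Ω} ∧
      (∀ y : Fin k → Fin m → ℝ, (∀ i, y i ∈ Ω) → 0 ≤ Gt y) ∧
      (∀ y : Fin k → Fin m → ℝ, (∀ i, y i ∈ Ω) →
        G y = Gt y + Γ (fun i => y ⟨i.val, lt_of_lt_of_le i.isLt (Nat.sub_le k 1)⟩) -
          Γ (fun i => y ⟨i.val + 1, by have h := i.isLt; omega⟩)) := by
  obtain ⟨r, rfl⟩ : ∃ r, k = r + 1 := ⟨k - 1, by omega⟩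
  have hcompact : IsCompact {y : Fin (r + 1) → Fin m → ℝ | ∀ i, y i ∈ Ω} := by
    simpa [Set.pi] using isCompact_univ_pi fun _ : Fin (r + 1) => hΩc
  have hbdd := fun y => bddBelow_pathCost (y := y) G h0 hG0 hbd (hcompact.bddAbove_image hGcont)
  have hΓ := continuousOn_infCost G h0 hbdd (hcompact.uniformContinuousOn_of_continuous hGcont)
  have hinit : Continuous (Fin.init : (Fin (r + 1) → Fin m → ℝ) → Fin r → Fin m → ℝ) :=
    continuous_pi fun i => continuous_apply _
  have htail : Continuous (Fin.tail : (Fin (r + 1) → Fin m → ℝ) → Fin r → Fin m → ℝ) :=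
    continuous_pi fun i => continuous_apply _
  refine ⟨fun y => G y + infCost G Ω (Fin.init y) - infCost G Ω (Fin.tail y),
    fun y => -infCost G Ω y, ?_, hΓ.neg, fun y hy => ?_, fun y _ => ?_⟩
  · exact (hGcont.add (hΓ.comp hinit.continuousOn fun y hy i => hy _)).sub
      (hΓ.comp htail.continuousOn fun y hy i => hy _)
  · linarith [infCost_tail_le G h0 hbdd hy]
  · change G y = _ + -infCost G Ω (Fin.init y) - -infCost G Ω (Fin.tail y)
    ring
end

section
/- Let α = (α_n)_{n∈ℤ} be a sequence of real numbers with α_n = 0 for n < 0, and suppose: ∑_n |α_n|⁶ < ∞; ∑_n |α_{n+3} − α_{n+2} − α_{n+1} + α_n|² < ∞ (i.e. (S−1)²(S+1)α ∈ ℓ²); and ∑_n |α_{n+2} − 2α_{n+1} + α_n|⁴ < ∞ (i.e. (S−1)²α ∈ ℓ⁴). Set γ_n = α_{n+2} − α_n. Then for all integers m₁, m₂, m₃, m₄: (a) ∑_{j∈ℤ} |α_{j+m₁} α_{j+m₂} γ_{j+m₃} γ_{j+m₄}| < ∞; (b) ∑_{j∈ℤ} |α_{j+m₁} α_{j+m₂}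 α_{j+m₃} (γ_{j+m₄+1} − γ_{j+m₄})| < ∞; (c) the series ∑_{j∈ℤ} α_{j+m₁} α_{j+m₂} α_{j+m₃} γ_{j+m₄} converges conditionally, i.e. the symmetric partial sums ∑_{j=−N}^{N} α_{j+m₁} α_{j+m₂} α_{j+m₃} γ_{j+m₄} converge to a finite limit as N → ∞. -/
/-!
Parts (a) and (b) are Hölder pairings `ℓ⁶ · ℓ⁶ · ℓ³ · ℓ³ ⊆ ℓ¹` and `ℓ⁶ · ℓ⁶ · ℓ⁶ · ℓ² ⊆ ℓ¹`
(pointwise Young inequalities) once `γ ∈ ℓ³` is known. That comes from summation by parts: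
`∑ |γₙ|³ = ∑ (αₙ₊₂ - αₙ) |γₙ| γₙ` moves the difference onto `|γ| γ`, whose increments are at most
`(|γₙ| + |γₙ₊₂|) |γₙ₊₂ - γₙ|` with `γₙ₊₂ - γₙ = δₙ + δₙ₊₁`; Young's inequality then bounds every
partial sum by a third of itself plus a constant.

For (c), let `ψ(a, b, c)` be the class of `j ↦ α_{j+a} α_{j+b} α_{j+c} γ_{j+d}` modulo sequences
whose symmetric partial sums converge. By (b) it does not depend on `d`, and by (a) it only depends
on `a, b, c` modulo 2. Telescoping `j ↦ α_{j+a} α_{j+b} α_{j+c} α_{j+d}` along `j ↦ j + 2` gives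
`ψ(a,b,c) + ψ(a,b,d) + ψ(a,c,d) + ψ(b,c,d) = 0`; taking `a = b = c = d`, then `b = c = d`, then
`c = d` forces `ψ = 0`.
-/

open Filter Finset Function SummationFilter Topology

namespace ShiftDiff

lemma young_six_three_two (u : ℝ) {v : ℝ} (hv : 0 ≤ v) (w : ℝ) :
    u * v * w ≤ 32 / 3 * u ^ 6 + v ^ 3 / 24 + w ^ 2 / 2 := by
  nlinarith [sq_nonneg (u * v - w), mul_nonneg (sq_nonneg (4 * u ^ 2 - v / 2))
    (by positivity : 0 ≤ 4 * u ^ 2 + v)]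

lemma mul_mul_le_add_pow_three {x y z : ℝ} (hx : 0 ≤ x) (hy : 0 ≤ y) (hz : 0 ≤ z) :
    x * y * z ≤ (x ^ 3 + y ^ 3 + z ^ 3) / 3 := by
  nlinarith [mul_nonneg (add_nonneg (add_nonneg hx hy) hz)
    (add_nonneg (add_nonneg (sq_nonneg (x - y)) (sq_nonneg (y - z))) (sq_nonneg (x - z)))]

lemma young_six_six_three_three {a b c d : ℝ} (ha : 0 ≤ a) (hb : 0 ≤ b) (hc : 0 ≤ c)
    (hd : 0 ≤ d) : a * b * c * d ≤ a ^ 6 / 6 + b ^ 6 / 6 + c ^ 3 / 3 + d ^ 3 / 3 := by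
  have h := mul_mul_le_add_pow_three (mul_nonneg ha hb) hc hd
  nlinarith [sq_nonneg (a ^ 3 - b ^ 3)]

lemma young_six_six_six_two (a b c e : ℝ) :
    a * b * c * e ≤ a ^ 6 / 6 + b ^ 6 / 6 + c ^ 6 / 6 + e ^ 2 / 2 := by
  have h := mul_mul_le_add_pow_three (sq_nonneg a) (sq_nonneg b) (sq_nonneg c)
  nlinarith [sq_nonneg (a * b * c - e)]

lemma abs_mul_self_sub_abs_mul_self_le (x y : ℝ) :
    |(|x| * x - |y| * y)| ≤ (|x| + |y|) * |x - y| := by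
  calc |(|x| * x - |y| * y)| = |(|x| * (x - y) + (|x| - |y|) * y)| := by ring_nf
    _ ≤ |x| * |x - y| + |x - y| * |y| := by
      refine (abs_add_le _ _).trans ?_
      rw [abs_mul, abs_mul, abs_abs]
      exact add_le_add le_rfl
        (mul_le_mul_of_nonneg_right (abs_abs_sub_abs_le_abs_sub x y) (abs_nonneg y))
    _ = (|x| + |y|) * |x - y| := by ring

lemma summable_abs_mul_of_six_six_three_three {ι : Type*} {f g u v : ι → ℝ}
    (hf : Summable fun i => |f i| ^ 6) (hg : Summable fun i => |g i| ^ 6)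
    (hu : Summable fun i => |u i| ^ 3) (hv : Summable fun i => |v i| ^ 3) :
    Summable fun i => |f i * g i * u i * v i| := by
  refine .of_nonneg_of_le (fun i => abs_nonneg _) (fun i => ?_)
    ((((hf.div_const 6).add (hg.div_const 6)).add (hu.div_const 3)).add (hv.div_const 3))
  simp only [abs_mul]
  exact young_six_six_three_three (abs_nonneg _) (abs_nonneg _) (abs_nonneg _) (abs_nonneg _)

lemma summable_abs_mul_of_six_six_six_two {ι : Type*} {f g h u : ι → ℝ}
    (hf : Summable fun i => |f i| ^ 6) (hg : Summable fun i => |g i| ^ 6)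
    (hh : Summable fun i => |h i| ^ 6) (hu : Summable fun i => |u i| ^ 2) :
    Summable fun i => |f i * g i * h i * u i| := by
  refine .of_nonneg_of_le (fun i => abs_nonneg _) (fun i => ?_)
    ((((hf.div_const 6).add (hg.div_const 6)).add (hh.div_const 6)).add (hu.div_const 2))
  simp only [abs_mul]
  exact young_six_six_six_two _ _ _ _

lemma _root_.Summable.comp_add_int {f : ℤ → ℝ} (hf : Summable f) (m : ℤ) :
    Summable fun n => f (n + m) :=
  hf.comp_injective (add_left_injective m)

lemma summable_of_sum_Icc_le {f : ℤ → ℝ} (hf : ∀ n, 0 ≤ f n) {C : ℝ}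
    (h : ∀ N : ℕ, ∑ n ∈ Icc (-(N : ℤ)) N, f n ≤ C) : Summable f := by
  refine summable_of_sum_le (c := C) hf fun u => ?_
  set K : ℕ := u.sup Int.natAbs
  have hu : u ⊆ Icc (-(K : ℤ)) K := fun x hx => by
    have : x.natAbs ≤ K := le_sup (f := Int.natAbs) hx
    simp only [mem_Icc]
    omega
  exact (sum_le_sum_of_subset_of_nonneg hu fun n _ _ => hf n).trans (h K)

lemma tendsto_cofinite_zero_of_summable_abs_pow {ι : Type*} {f : ι → ℝ} {p : ℕ} (hp : p ≠ 0)
    (hf : Summable fun i => |f i| ^ p) : Tendsto f cofinite (𝓝 0) := by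
  have h := hf.tendsto_cofinite_zero.rpow_const (p := (p : ℝ)⁻¹)
    (Or.inr (inv_nonneg.2 p.cast_nonneg))
  simp only [Real.pow_rpow_inv_natCast (abs_nonneg _) hp,
    Real.zero_rpow (inv_ne_zero (Nat.cast_ne_zero.2 hp))] at h
  exact (tendsto_zero_iff_abs_tendsto_zero f).2 h

lemma exists_abs_le_of_tendsto_cofinite {ι : Type*} {f : ι → ℝ} {a : ℝ}
    (hf : Tendsto f cofinite (𝓝 a)) : ∃ B, ∀ i, |f i| ≤ B := by
  obtain ⟨B, hB⟩ := hf.abs.bddAbove_range_of_cofinite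
  exact ⟨B, fun i => hB ⟨i, rfl⟩⟩

lemma sum_Icc_sub_add_one {M : Type*} [AddCommGroup M] (g : ℤ → M) {a b : ℤ} (hab : a ≤ b + 1) :
    ∑ j ∈ Icc a b, (g (j + 1) - g j) = g (b + 1) - g a := by
  induction b, (show a - 1 ≤ b by omega) using Int.leInduction with
  | base => simp
  | succ b hab ih =>
    rw [← Finset.insert_Icc_right_eq_Icc_add_one (by omega), sum_insert (by simp), ih (by omega)]
    abel

lemma sum_Icc_sub_add_two {M : Type*} [AddCommGroup M] (g : ℤ → M) {a b : ℤ} (hab : a ≤ b + 1) :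
    ∑ j ∈ Icc a b, (g (j + 2) - g j) = g (b + 1) + g (b + 2) - g a - g (a + 1) := by
  have h := sum_Icc_sub_add_one (fun j => g (j + 1)) hab
  simp only [add_assoc, one_add_one_eq_two] at h
  calc _ = ∑ j ∈ Icc a b, ((g (j + 2) - g (j + 1)) + (g (j + 1) - g j)) := by
        simp only [sub_add_sub_cancel]
    _ = _ := by
        rw [sum_add_distrib, h, sum_Icc_sub_add_one g hab]
        abel

lemma sum_Icc_sub_add_two_le {g : ℤ → ℝ} {K : ℝ} (hg : ∀ n, |g n| ≤ K) (N : ℕ) :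
    ∑ j ∈ Icc (-(N : ℤ)) N, (g (j + 2) - g j) ≤ 4 * K := by
  rw [sum_Icc_sub_add_two g (by omega)]
  linarith [abs_le.1 (hg (N + 1)), abs_le.1 (hg (N + 2)), abs_le.1 (hg (-N)),
    abs_le.1 (hg (-N + 1))]

lemma hasSum_symmetricIcc_sub_add_two {M : Type*} [AddCommGroup M] [TopologicalSpace M]
    [IsTopologicalAddGroup M] {g : ℤ → M} (hg : Tendsto g cofinite (𝓝 0)) :
    HasSum (fun j => g (j + 2) - g j) 0 (symmetricIcc ℤ) := by
  have hlim : ∀ e : ℕ → ℤ, Injective e → Tendsto (g ∘ e) atTop (𝓝 0) := fun e he => by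
    rw [← Nat.cofinite_eq_atTop]
    exact hg.comp he.tendsto_cofinite
  rw [hasSum_symmetricIcc_iff]
  simp_rw [fun N : ℕ => sum_Icc_sub_add_two g (show -(N : ℤ) ≤ N + 1 by omega)]
  have h := (((hlim (fun N => N + 1) fun _ _ h => by simpa using h).add
    (hlim (fun N => N + 2) fun _ _ h => by simpa using h)).sub
    (hlim (fun N => -N) fun _ _ h => by simpa using h)).sub
    (hlim (fun N => -N + 1) fun _ _ h => by simpa using h)
  simpa using h

def symmetricSummable : Submodule ℝ (ℤ → ℝ) where
  carrier := {f | Summable f (symmetricIcc ℤ)}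
  add_mem' := Summable.add
  zero_mem' := summable_zero
  smul_mem' c _ hf := hf.const_smul c

lemma mem_symmetricSummable_of_summable {f : ℤ → ℝ} (hf : Summable f) : f ∈ symmetricSummable :=
  hf.mono_filter (symmetricIcc ℤ).le_atTop

def γ (α : ℤ → ℝ) (n : ℤ) : ℝ := α (n + 2) - α n

-- `δ = (S - 1) γ = (S - 1)² (S + 1) α`
def δ (α : ℤ → ℝ) (n : ℤ) : ℝ := (α (n + 3) - α (n + 1)) - (α (n + 2) - α n)

lemma γ_add_two_sub_γ (α : ℤ → ℝ) (n : ℤ) : γ α (n + 2) - γ α n = δ α n + δ α (n + 1) := by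
  simp only [γ, δ]
  ring_nf

lemma abs_γ_pow_three_eq (α : ℤ → ℝ) (n : ℤ) :
    |γ α n| ^ 3 = α (n + 2) * (|γ α n| * γ α n - |γ α (n + 2)| * γ α (n + 2))
      + (α (n + 2) * (|γ α (n + 2)| * γ α (n + 2)) - α n * (|γ α n| * γ α n)) := by
  rw [pow_succ, sq_abs]
  simp only [γ]
  ring

lemma mul_sub_abs_mul_self_le (α : ℤ → ℝ) (n : ℤ) :
    α (n + 2) * (|γ α n| * γ α n - |γ α (n + 2)| * γ α (n + 2)) ≤
      32 / 3 * |α (n + 2)| ^ 6 + (|γ α n| ^ 3 + |γ α (n + 2)| ^ 3) / 6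
        + (|δ α n| ^ 2 + |δ α (n + 1)| ^ 2) := by
  set x := γ α n
  set y := γ α (n + 2)
  have hxy : |x - y| ≤ |δ α n| + |δ α (n + 1)| := by
    rw [abs_sub_comm, γ_add_two_sub_γ]
    exact abs_add_le _ _
  have h3 := add_pow_le (abs_nonneg x) (abs_nonneg y) 3
  have h2 := add_pow_le (abs_nonneg (δ α n)) (abs_nonneg (δ α (n + 1))) 2
  norm_num only at h3 h2
  calc _ ≤ |α (n + 2)| * ((|x| + |y|) * (|δ α n| + |δ α (n + 1)|)) := by
        refine (le_abs_self _).trans ?_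
        rw [abs_mul]
        gcongr
        exact (abs_mul_self_sub_abs_mul_self_le x y).trans (by gcongr)
    _ ≤ 32 / 3 * |α (n + 2)| ^ 6 + (|x| + |y|) ^ 3 / 24 + (|δ α n| + |δ α (n + 1)|) ^ 2 / 2 := by
        rw [← mul_assoc]
        exact young_six_three_two _ (by positivity) _
    _ ≤ _ := by linarith

section CubeSummable

variable {α : ℤ → ℝ}

lemma exists_sum_Icc_abs_γ_pow_three_le (h6 : Summable fun n => |α n| ^ 6)
    (hδ : Summable fun n => |δ α n| ^ 2) :
    ∃ C, ∀ N : ℕ, ∑ n ∈ Icc (-(N : ℤ)) N, |γ α n| ^ 3 ≤ C := by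
  obtain ⟨B, hB⟩ := exists_abs_le_of_tendsto_cofinite
    (tendsto_cofinite_zero_of_summable_abs_pow (by norm_num) h6)
  have hB0 : 0 ≤ B := (abs_nonneg _).trans (hB 0)
  have hγ : ∀ n, |γ α n| ≤ 2 * B := fun n => (abs_sub _ _).trans (by linarith [hB (n + 2), hB n])
  have hcube : ∀ n, |(|γ α n| ^ 3)| ≤ 8 * B ^ 3 := fun n => by
    rw [abs_of_nonneg (by positivity)]
    linarith [pow_le_pow_left₀ (abs_nonneg _) (hγ n) 3]
  have hprod : ∀ n, |α n * (|γ α n| * γ α n)| ≤ 4 * B ^ 3 := fun n => by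
    rw [abs_mul, abs_mul, abs_abs, ← sq]
    nlinarith [hB n, pow_le_pow_left₀ (abs_nonneg _) (hγ n) 2, abs_nonneg (α n)]
  refine ⟨3 / 2 * (32 / 3 * ∑' n, |α (n + 2)| ^ 6 + (∑' n, |δ α n| ^ 2 + ∑' n, |δ α (n + 1)| ^ 2)
    + 64 / 3 * B ^ 3), fun N => ?_⟩
  have hsplit : ∑ n ∈ Icc (-(N : ℤ)) N, |γ α n| ^ 3 =
      ∑ n ∈ Icc (-(N : ℤ)) N, α (n + 2) * (|γ α n| * γ α n - |γ α (n + 2)| * γ α (n + 2))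
        + ∑ n ∈ Icc (-(N : ℤ)) N,
          (α (n + 2) * (|γ α (n + 2)| * γ α (n + 2)) - α n * (|γ α n| * γ α n)) := by
    rw [← sum_add_distrib]
    exact sum_congr rfl fun n _ => abs_γ_pow_three_eq α n
  have hbulk := sum_le_sum fun n (_ : n ∈ Icc (-(N : ℤ)) N) => mul_sub_abs_mul_self_le α n
  have hshift := sum_Icc_sub_add_two_le hcube N
  have hbdry := sum_Icc_sub_add_two_le hprod N
  simp only [sum_add_distrib, ← sum_div, ← mul_sum, sum_sub_distrib] at hsplit hbulk hshift hbdry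
  have hα : ∑ n ∈ Icc (-(N : ℤ)) N, |α (n + 2)| ^ 6 ≤ ∑' n, |α (n + 2)| ^ 6 :=
    (h6.comp_add_int 2).sum_le_tsum _ fun _ _ => pow_nonneg (abs_nonneg _) _
  have hδ₀ : ∑ n ∈ Icc (-(N : ℤ)) N, |δ α n| ^ 2 ≤ ∑' n, |δ α n| ^ 2 :=
    hδ.sum_le_tsum _ fun _ _ => pow_nonneg (abs_nonneg _) _
  have hδ₁ : ∑ n ∈ Icc (-(N : ℤ)) N, |δ α (n + 1)| ^ 2 ≤ ∑' n, |δ α (n + 1)| ^ 2 :=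
    (hδ.comp_add_int 1).sum_le_tsum _ fun _ _ => pow_nonneg (abs_nonneg _) _
  linarith

lemma summable_abs_γ_pow_three (h6 : Summable fun n => |α n| ^ 6)
    (hδ : Summable fun n => |δ α n| ^ 2) : Summable fun n => |γ α n| ^ 3 := by
  obtain ⟨C, hC⟩ := exists_sum_Icc_abs_γ_pow_three_le h6 hδ
  exact summable_of_sum_Icc_le (fun n => by positivity) hC

end CubeSummable

def summand (α : ℤ → ℝ) (a b c d : ℤ) (j : ℤ) : ℝ :=
  α (j + a) * α (j + b) * α (j + c) * γ α (j + d)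

lemma summand_comm₁₂ (α : ℤ → ℝ) (a b c d : ℤ) : summand α a b c d = summand α b a c d := by
  ext j
  simp only [summand]
  ring

lemma summand_comm₁₃ (α : ℤ → ℝ) (a b c d : ℤ) : summand α a b c d = summand α c b a d := by
  ext j
  simp only [summand]
  ring

def summandClass (α : ℤ → ℝ) (a b c d : ℤ) : (ℤ → ℝ) ⧸ symmetricSummable :=
  Submodule.Quotient.mk (summand α a b c d)

section SummandClass

variable {α : ℤ → ℝ}

lemma summandClass_add_two_left (h6 : Summable fun n => |α n| ^ 6)
    (hγ : Summable fun n => |γ α n| ^ 3) (a b c d : ℤ) :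
    summandClass α (a + 2) b c d = summandClass α a b c d := by
  refine (Submodule.Quotient.eq _).2 (mem_symmetricSummable_of_summable ?_)
  refine (summable_abs_mul_of_six_six_three_three (h6.comp_add_int b) (h6.comp_add_int c)
    (hγ.comp_add_int a) (hγ.comp_add_int d)).of_abs.congr fun j => ?_
  simp only [Pi.sub_apply, summand, γ, ← add_assoc]
  ring

lemma summandClass_add_two_mid (h6 : Summable fun n => |α n| ^ 6)
    (hγ : Summable fun n => |γ α n| ^ 3) (a b c d : ℤ) :
    summandClass α a (b + 2) c d = summandClass α a b c d := by
  simp only [summandClass, summand_comm₁₂ α a]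
  exact summandClass_add_two_left h6 hγ b a c d

lemma summandClass_add_two_right (h6 : Summable fun n => |α n| ^ 6)
    (hγ : Summable fun n => |γ α n| ^ 3) (a b c d : ℤ) :
    summandClass α a b (c + 2) d = summandClass α a b c d := by
  simp only [summandClass, summand_comm₁₃ α a]
  exact summandClass_add_two_left h6 hγ c b a d

lemma summandClass_add_one_last (h6 : Summable fun n => |α n| ^ 6)
    (hδ : Summable fun n => |δ α n| ^ 2) (a b c d : ℤ) :
    summandClass α a b c (d + 1) = summandClass α a b c d := by
  refine (Submodule.Quotient.eq _).2 (mem_symmetricSummable_of_summable ?_)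
  refine (summable_abs_mul_of_six_six_six_two (h6.comp_add_int a) (h6.comp_add_int b)
    (h6.comp_add_int c) (hδ.comp_add_int d)).of_abs.congr fun j => ?_
  simp only [Pi.sub_apply, summand, γ, δ]
  ring_nf

lemma summandClass_eq_last_zero (h6 : Summable fun n => |α n| ^ 6)
    (hδ : Summable fun n => |δ α n| ^ 2) (a b c d : ℤ) :
    summandClass α a b c d = summandClass α a b c 0 := by
  induction d using Int.induction_on with
  | zero => rfl
  | succ d ih => rw [summandClass_add_one_last h6 hδ, ih]
  | pred d ih => rw [← ih, ← summandClass_add_one_last h6 hδ, sub_add_cancel]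

lemma summandClass_telescope (h6 : Summable fun n => |α n| ^ 6) (a b c d : ℤ) :
    summandClass α (a + 2) (b + 2) (c + 2) d + summandClass α (a + 2) (b + 2) d c
      + summandClass α (a + 2) c d b + summandClass α b c d a = 0 := by
  have hα := tendsto_cofinite_zero_of_summable_abs_pow (by norm_num) h6
  have hshift : ∀ m : ℤ, Tendsto (fun j => α (j + m)) cofinite (𝓝 0) := fun m =>
    hα.comp (add_left_injective m).tendsto_cofinite
  have hprod : Tendsto (fun j => α (j + a) * α (j + b) * α (j + c) * α (j + d)) cofinite (𝓝 0) := by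
    simpa using (((hshift a).mul (hshift b)).mul (hshift c)).mul (hshift d)
  simp only [summandClass, ← Submodule.Quotient.mk_add]
  refine (Submodule.Quotient.mk_eq_zero _).2 ?_
  refine ((hasSum_symmetricIcc_sub_add_two hprod).summable).congr fun j => ?_
  simp only [Pi.add_apply, summand, γ]
  ring_nf

lemma summandClass_eq_zero (h6 : Summable fun n => |α n| ^ 6)
    (hγ : Summable fun n => |γ α n| ^ 3) (hδ : Summable fun n => |δ α n| ^ 2) (a b c d : ℤ) :
    summandClass α a b c d = 0 := by
  set ψ := fun a b c => summandClass α a b c 0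
  have key : ∀ a b c d, ψ a b c + ψ a b d + ψ a c d + ψ b c d = 0 := fun a b c d => by
    simpa only [summandClass_eq_last_zero h6 hδ, summandClass_add_two_left h6 hγ,
      summandClass_add_two_mid h6 hγ, summandClass_add_two_right h6 hγ]
      using summandClass_telescope h6 a b c d
  have h₁ : ∀ x, ψ x x x = 0 := fun x => by
    linear_combination (norm := module) (4⁻¹ : ℝ) • key x x x x
  have h₂ : ∀ a x, ψ a x x = 0 := fun a x => by
    linear_combination (norm := module) (3⁻¹ : ℝ) • (key a x x x - h₁ x)
  rw [summandClass_eq_last_zero h6 hδ]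
  linear_combination (norm := module) (2⁻¹ : ℝ) • (key a b c c - h₂ a c - h₂ b c)

lemma summable_symmetricIcc_summand (h6 : Summable fun n => |α n| ^ 6)
    (hδ : Summable fun n => |δ α n| ^ 2) (a b c d : ℤ) :
    Summable (summand α a b c d) (symmetricIcc ℤ) :=
  (Submodule.Quotient.mk_eq_zero _).1
    (summandClass_eq_zero h6 (summable_abs_γ_pow_three h6 hδ) hδ a b c d)

end SummandClass

end ShiftDiff

theorem stmt18_general (α : ℤ → ℝ)
    (h6 : Summable fun n : ℤ => |α n| ^ (6 : ℕ))
    (hL1 : Summable fun n : ℤ => |α (n + 3) - α (n + 2) - α (n + 1) + α n| ^ (2 : ℕ))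
    (m₁ m₂ m₃ m₄ : ℤ) :
    (Summable fun j : ℤ =>
      |α (j + m₁) * α (j + m₂) * (α (j + m₃ + 2) - α (j + m₃)) * (α (j + m₄ + 2) - α (j + m₄))|) ∧
    (Summable fun j : ℤ =>
      |α (j + m₁) * α (j + m₂) * α (j + m₃) *
        ((α (j + m₄ + 3) - α (j + m₄ + 1)) - (α (j + m₄ + 2) - α (j + m₄)))|) ∧
    (∃ L : ℝ, Filter.Tendsto
      (fun N : ℕ => ∑ j ∈ Finset.Icc (-(N : ℤ)) (N : ℤ),
        α (j + m₁) * α (j + m₂) * α (j + m₃) * (α (j + m₄ + 2) - α (j + m₄)))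
      Filter.atTop (nhds L)) := by
  have hδ : Summable fun n => |ShiftDiff.δ α n| ^ 2 :=
    hL1.congr fun n => by simp only [ShiftDiff.δ]; ring_nf
  have hγ := ShiftDiff.summable_abs_γ_pow_three h6 hδ
  refine ⟨ShiftDiff.summable_abs_mul_of_six_six_three_three (h6.comp_add_int m₁)
      (h6.comp_add_int m₂) (hγ.comp_add_int m₃) (hγ.comp_add_int m₄),
    ShiftDiff.summable_abs_mul_of_six_six_six_two (h6.comp_add_int m₁) (h6.comp_add_int m₂)
      (h6.comp_add_int m₃) (hδ.comp_add_int m₄), ?_⟩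
  exact ⟨_, SummationFilter.hasSum_symmetricIcc_iff.1
    (ShiftDiff.summable_symmetricIcc_summand h6 hδ m₁ m₂ m₃ m₄).hasSum⟩

theorem stmt18 (α : ℤ → ℝ) (h0 : ∀ n : ℤ, n < 0 → α n = 0)
    (h6 : Summable fun n : ℤ => |α n| ^ (6 : ℕ))
    (hL1 : Summable fun n : ℤ => |α (n + 3) - α (n + 2) - α (n + 1) + α n| ^ (2 : ℕ))
    (hL2 : Summable fun n : ℤ => |α (n + 2) - 2 * α (n + 1) + α n| ^ (4 : ℕ))
    (m₁ m₂ m₃ m₄ : ℤ) :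
    (Summable fun j : ℤ =>
      |α (j + m₁) * α (j + m₂) * (α (j + m₃ + 2) - α (j + m₃)) * (α (j + m₄ + 2) - α (j + m₄))|) ∧
    (Summable fun j : ℤ =>
      |α (j + m₁) * α (j + m₂) * α (j + m₃) *
        ((α (j + m₄ + 3) - α (j + m₄ + 1)) - (α (j + m₄ + 2) - α (j + m₄)))|) ∧
    (∃ L : ℝ, Filter.Tendsto
      (fun N : ℕ => ∑ j ∈ Finset.Icc (-(N : ℤ)) (N : ℤ),
        α (j + m₁) * α (j + m₂) * α (j + m₃) * (α (j + m₄ + 2) - α (j + m₄)))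
      Filter.atTop (nhds L)) :=
  stmt18_general α h6 hL1 m₁ m₂ m₃ m₄
end
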